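/- arXiv:0708.3767 — 2 statements merged into one kernel-verified Lean document; each statement's English description precedes it below -/
import Mathlib

section
/- Let A = {e, σ₁, σ₂, σ₃} and let φ : {1,2,3,4} → A be any injective function. Then in each of the cases I, II, III, d(φ(1),φ(4)) + r₁ ≤ d(φ(1),φ(2)) + d(φ(2),φ(3)) + d(φ(3),φ(4)); that is, every tour starting at φ(1), visiting all four elements of A, and ending at φ(4) has length at least d(φ(1),φ(4)) + r₁. -/
open MeasureTheory Filter ProbabilityTheory Topology
open scoped ENNReal

noncomputable section

/-- Finitely supported lamp configurations on `G`. -/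
abbrev Config (G : Type*) := G →₀ ZMod 2

variable {G : Type*} [Group G]

/-- The shifted configuration `(xη)(w) = η(x⁻¹ w)`. -/
def shiftConfig (x : G) (η : Config G) : Config G :=
  Finsupp.mapDomain (fun w => x * w) η

/-- Multiplication in the wreath product `ℤ₂ ≀ G`. -/
def llMul (z₁ z₂ : Config G × G) : Config G × G :=
  (z₁.1 + shiftConfig z₁.2 z₂.1, z₁.2 * z₂.2)

/-- Inversion in the wreath product `ℤ₂ ≀ G`. -/
def llInv (z : Config G × G) : Config G × G :=
  (shiftConfig z.2⁻¹ z.1, z.2⁻¹)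

/-- The identity `(𝟎, e)` of the wreath product. -/
def llOne (G : Type*) [Group G] : Config G × G := (0, 1)

/-- The word metric on `G` induced by the generating set `S` and the lengths `l`. -/
def wordDist (S : Set G) (l : G → ℝ) (x y : G) : ℝ :=
  sInf {r | ∃ (n : ℕ) (f : Fin n → G), (∀ i, f i ∈ S) ∧ y = x * (List.ofFn f).prod ∧
    r = ∑ i, l (f i)}

/-- The minimal length of a travelling salesman tour from `e` to `x` visiting all of
`supp η`. -/
def dTS (S : Set G) (l : G → ℝ) (η : Config G) (x : G) : ℝ :=
  sInf {r | ∃ (n : ℕ) (p : Fin (n + 1) → G), p 0 = 1 ∧ p (Fin.last n) = x ∧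
    (∀ i : Fin n, (p i.castSucc)⁻¹ * p i.succ ∈ S) ∧
    (↑η.support : Set G) ⊆ Set.range p ∧
    r = ∑ i : Fin n, l ((p i.castSucc)⁻¹ * p i.succ)}

instance : MeasurableSpace (Config G × G) := ⊤

/-- The data of a lamplighter random walk on `ℤ₂ ≀ G`. -/
structure LLRW (G : Type*) [Group G] (Ω : Type*) [MeasurableSpace Ω] (P : Measure Ω) where
  /-- generating set -/
  S : Finset G
  /-- lengths of generators -/
  l : G → ℝ
  one_not_mem : (1 : G) ∉ S
  S_symm : ∀ s ∈ S, s⁻¹ ∈ S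
  l_pos : ∀ s ∈ S, 0 < l s
  l_symm : ∀ s ∈ S, l s⁻¹ = l s
  S_gen : ∀ x : G, ∃ (n : ℕ) (f : Fin n → G), (∀ i, f i ∈ S) ∧ x = (List.ofFn f).prod
  /-- the step distribution -/
  μ : PMF (Config G × G)
  /-- increments of the walk -/
  inc : ℕ → Ω → Config G × G
  /-- the lamplighter random walk -/
  Z : ℕ → Ω → Config G × G
  Z_zero : ∀ ω, Z 0 ω = llOne G
  Z_succ : ∀ n ω, Z (n + 1) ω = llMul (Z n ω) (inc n ω)
  indep : iIndepFun (m := fun _ : ℕ => (inferInstance : MeasurableSpace (Config G × G))) inc P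
  ident : ∀ n, Measure.map (inc n) P = μ.toMeasure
  μ_gen : ∀ z : Config G × G, ∃ zs : List (Config G × G),
    (∀ w ∈ zs, w ∈ μ.support ∨ llInv w ∈ μ.support) ∧ z = zs.foldl llMul (llOne G)
  /-- bound on the lamp range of one step -/
  R : ℝ
  R_nonneg : 0 ≤ R
  lampRange : ∀ z ∈ μ.support, ∀ y ∈ z.1.support, wordDist (S : Set G) l 1 y ≤ R
  firstMoment : Summable fun z : Config G × G => wordDist (S : Set G) l 1 z.2 * (μ z).toReal

namespace LLRW

variable {Ω : Type*} [MeasurableSpace Ω] {P : Measure Ω}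

/-- position of the lamplighter at time `n` -/
def X (st : LLRW G Ω P) (n : ℕ) (ω : Ω) : G := (st.Z n ω).2

/-- lamp configuration at time `n` -/
def lamps (st : LLRW G Ω P) (n : ℕ) (ω : Ω) : Config G := (st.Z n ω).1

/-- transience of the projection of the walk on `G` -/
def Transient (st : LLRW G Ω P) : Prop := P {ω | ∃ n ≥ 1, st.X n ω = 1} < 1

end LLRW

end

noncomputable section

variable {G : Type*} [Group G]

/-- `s k` is not in the subgroup generated by the earlier generators `s 0, …, s (k−1)`. -/
def newGen (s : ℕ → G) (k : ℕ) : Prop :=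
  s k ∉ Subgroup.closure (s '' {j | j < k})

/-- Case I of the choice of `σ₁, σ₂, σ₃`: `s₁ ≠ s₁⁻¹`, `σ₁ = s₁`, `σ₂ = s₁⁻¹` and `σ₃ = s_i`
with `i` minimal (`i ≥ 2` when `1`-indexed) such that `s_i ∉ ⟨s₁⁻¹, s₁, …, s_{i−1}⟩`. -/
def CaseI (s : ℕ → G) (r : ℕ) (σ₁ σ₂ σ₃ : G) : Prop :=
  s 0 ≠ (s 0)⁻¹ ∧ σ₁ = s 0 ∧ σ₂ = (s 0)⁻¹ ∧
    ∃ i, 1 ≤ i ∧ i < r ∧ σ₃ = s i ∧ newGen s i ∧ ∀ k, 1 ≤ k → k < i → ¬ newGen s k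

/-- Case II: `s₁ = s₁⁻¹`, `s₂ = s₂⁻¹`, `σ₁ = s₁`, `σ₂ = s₂` and `σ₃ = s_i` with `i` minimal
(`i ≥ 3` when `1`-indexed) such that `s_i ∉ ⟨s₁, …, s_{i−1}⟩`. -/
def CaseII (s : ℕ → G) (r : ℕ) (σ₁ σ₂ σ₃ : G) : Prop :=
  s 0 = (s 0)⁻¹ ∧ s 1 = (s 1)⁻¹ ∧ σ₁ = s 0 ∧ σ₂ = s 1 ∧
    ∃ i, 2 ≤ i ∧ i < r ∧ σ₃ = s i ∧ newGen s i ∧ ∀ k, 2 ≤ k → k < i → ¬ newGen s k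

/-- Case III: `s₁ = s₁⁻¹`, `s₂ ≠ s₂⁻¹`, `σ₁ = s₁`, `σ₂ = s₂`, `σ₃ = s₂⁻¹`. -/
def CaseIII (s : ℕ → G) (σ₁ σ₂ σ₃ : G) : Prop :=
  s 0 = (s 0)⁻¹ ∧ s 1 ≠ (s 1)⁻¹ ∧ σ₁ = s 0 ∧ σ₂ = s 1 ∧ σ₃ = (s 1)⁻¹

end


noncomputable section WDHelperLemmas

variable {G : Type*} [Group G]

private lemma wd_eq (S : Finset G) (l : G → ℝ) (x y : G) :
    wordDist (↑S) l x y = sInf {r : ℝ | ∃ L : List G, (∀ t ∈ L, t ∈ S) ∧ y = x * L.prod ∧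
      r = (L.map l).sum} := by
  unfold wordDist
  congr 1
  ext r
  simp only [Set.mem_setOf_eq, Finset.mem_coe]
  constructor
  · rintro ⟨n, f, hf, hy, rfl⟩
    exact ⟨List.ofFn f,
      fun t ht => by obtain ⟨i, rfl⟩ := List.mem_ofFn.1 ht; exact hf i,
      hy, by rw [List.map_ofFn, List.sum_ofFn]; rfl⟩
  · rintro ⟨L, hL, hy, rfl⟩
    refine ⟨L.length, L.get, fun i => hL _ (L.get_mem _), by rwa [List.ofFn_get], ?_⟩
    conv_lhs => rw [← List.ofFn_get L]
    rw [List.map_ofFn, List.sum_ofFn]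
    rfl

private lemma wd_nonempty (S : Finset G) (l : G → ℝ)
    (hgen : ∀ x : G, ∃ (n : ℕ) (f : Fin n → G), (∀ i, f i ∈ S) ∧ x = (List.ofFn f).prod)
    (x y : G) :
    {r : ℝ | ∃ L : List G, (∀ t ∈ L, t ∈ S) ∧ y = x * L.prod ∧ r = (L.map l).sum}.Nonempty := by
  obtain ⟨n, f, hf, hx⟩ := hgen (x⁻¹ * y)
  exact ⟨((List.ofFn f).map l).sum, List.ofFn f,
    fun t ht => by obtain ⟨i, rfl⟩ := List.mem_ofFn.1 ht; exact hf i,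
    by rw [← hx]; simp, rfl⟩

private lemma wd_bdd (S : Finset G) (l : G → ℝ) (hpos : ∀ t ∈ S, 0 < l t) (x y : G) :
    BddBelow {r : ℝ | ∃ L : List G, (∀ t ∈ L, t ∈ S) ∧ y = x * L.prod ∧ r = (L.map l).sum} := by
  refine ⟨0, fun r hr => ?_⟩
  obtain ⟨L, hL, -, rfl⟩ := hr
  exact List.sum_nonneg fun a ha => by
    obtain ⟨t, ht, rfl⟩ := List.mem_map.1 ha
    exact (hpos t (hL t ht)).le

private lemma wd_le (S : Finset G) (l : G → ℝ) (hpos : ∀ t ∈ S, 0 < l t) (x y : G) (L : List G)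
    (hL : ∀ t ∈ L, t ∈ S) (hy : y = x * L.prod) :
    wordDist (↑S) l x y ≤ (L.map l).sum := by
  rw [wd_eq]
  exact csInf_le (wd_bdd S l hpos x y) ⟨L, hL, hy, rfl⟩

private lemma le_wd (S : Finset G) (l : G → ℝ)
    (hgen : ∀ x : G, ∃ (n : ℕ) (f : Fin n → G), (∀ i, f i ∈ S) ∧ x = (List.ofFn f).prod)
    (x y : G) (c : ℝ)
    (h : ∀ L : List G, (∀ t ∈ L, t ∈ S) → y = x * L.prod → c ≤ (L.map l).sum) :
    c ≤ wordDist (↑S) l x y := by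
  rw [wd_eq]
  exact le_csInf (wd_nonempty S l hgen x y) fun r hr => by
    obtain ⟨L, h1, h2, rfl⟩ := hr; exact h L h1 h2

private lemma wd_le_single (S : Finset G) (l : G → ℝ) (hpos : ∀ t ∈ S, 0 < l t) (t : G)
    (ht : t ∈ S) : wordDist (↑S) l 1 t ≤ l t := by
  have := wd_le S l hpos 1 t ([t]) (by simpa using ht) (by simp)
  simpa using this

private lemma wd_triangle (S : Finset G) (l : G → ℝ) (hpos : ∀ t ∈ S, 0 < l t)
    (hgen : ∀ x : G, ∃ (n : ℕ) (f : Fin n → G), (∀ i, f i ∈ S) ∧ x = (List.ofFn f).prod)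
    (x y z : G) :
    wordDist (↑S) l x z ≤ wordDist (↑S) l x y + wordDist (↑S) l y z := by
  have key : ∀ L₁ : List G, (∀ t ∈ L₁, t ∈ S) → y = x * L₁.prod →
      ∀ L₂ : List G, (∀ t ∈ L₂, t ∈ S) → z = y * L₂.prod →
      wordDist (↑S) l x z ≤ (L₁.map l).sum + (L₂.map l).sum := by
    intro L₁ h1 hy L₂ h2 hz
    have := wd_le S l hpos x z (L₁ ++ L₂)
      (fun t ht => (List.mem_append.1 ht).elim (h1 t) (h2 t))
      (by rw [List.prod_append, ← mul_assoc, ← hy, ← hz])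
    simpa [List.map_append, List.sum_append] using this
  have h1 : ∀ L₁ : List G, (∀ t ∈ L₁, t ∈ S) → y = x * L₁.prod →
      wordDist (↑S) l x z - (L₁.map l).sum ≤ wordDist (↑S) l y z := by
    intro L₁ hL hy
    refine le_wd S l hgen y z _ (fun L₂ h2 hz => ?_)
    linarith [key L₁ hL hy L₂ h2 hz]
  have h2 : wordDist (↑S) l x z - wordDist (↑S) l y z ≤ wordDist (↑S) l x y := by
    refine le_wd S l hgen x y _ (fun L₁ hL hy => ?_)
    linarith [h1 L₁ hL hy]
  linarith

private lemma wd_symm (S : Finset G) (l : G → ℝ) (hpos : ∀ t ∈ S, 0 < l t)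
    (hgen : ∀ x : G, ∃ (n : ℕ) (f : Fin n → G), (∀ i, f i ∈ S) ∧ x = (List.ofFn f).prod)
    (hS : ∀ t ∈ S, t⁻¹ ∈ S) (hl : ∀ t ∈ S, l t⁻¹ = l t) (x y : G) :
    wordDist (↑S) l x y = wordDist (↑S) l y x := by
  have main : ∀ u v : G, wordDist (↑S) l v u ≤ wordDist (↑S) l u v := by
    intro u v
    rw [wd_eq S l u v]
    refine le_csInf (wd_nonempty S l hgen u v) (fun r hr => ?_)
    obtain ⟨L, hL, hv, rfl⟩ := hr
    have hx : u = v * ((L.map (·⁻¹)).reverse).prod := by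
      have h1 : ((L.map (·⁻¹)).reverse).prod = L.prod⁻¹ := (List.prod_inv_reverse L).symm
      rw [h1, hv]; simp
    have hmem : ∀ t ∈ (L.map (·⁻¹)).reverse, t ∈ S := by
      intro t ht
      rw [List.mem_reverse, List.mem_map] at ht
      obtain ⟨w, hw, rfl⟩ := ht
      exact hS w (hL w hw)
    have hsum : (((L.map (·⁻¹)).reverse).map l).sum = (L.map l).sum := by
      rw [List.map_reverse, List.sum_reverse, List.map_map]
      congr 1
      exact List.map_congr_left fun t ht => hl t (hL t ht)
    calc wordDist (↑S) l v u ≤ (((L.map (·⁻¹)).reverse).map l).sum :=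
          wd_le S l hpos v u _ hmem hx
      _ = (L.map l).sum := hsum
  exact le_antisymm (main y x) (main x y)

private lemma wd_shift (S : Finset G) (l : G → ℝ) (x y : G) :
    wordDist (↑S) l x y = wordDist (↑S) l 1 (x⁻¹ * y) := by
  rw [wd_eq, wd_eq]
  congr 1
  ext r
  simp only [Set.mem_setOf_eq]
  constructor
  · rintro ⟨L, hL, hy, rfl⟩
    exact ⟨L, hL, by rw [hy]; simp, rfl⟩
  · rintro ⟨L, hL, hy, rfl⟩
    rw [one_mul] at hy
    exact ⟨L, hL, by rw [← hy]; simp, rfl⟩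

private lemma wd_inv (S : Finset G) (l : G → ℝ) (hpos : ∀ t ∈ S, 0 < l t)
    (hgen : ∀ x : G, ∃ (n : ℕ) (f : Fin n → G), (∀ i, f i ∈ S) ∧ x = (List.ofFn f).prod)
    (hS : ∀ t ∈ S, t⁻¹ ∈ S) (hl : ∀ t ∈ S, l t⁻¹ = l t) (g : G) :
    wordDist (↑S) l 1 g⁻¹ = wordDist (↑S) l 1 g := by
  rw [wd_symm S l hpos hgen hS hl, wd_shift]
  simp

private lemma wd_ge_of_ne (S : Finset G) (l : G → ℝ) (r : ℕ) (s : ℕ → G)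
    (henum : ∀ x, x ∈ S ↔ ∃ i < r, s i = x)
    (hmono : ∀ i j, i ≤ j → j < r → l (s i) ≤ l (s j))
    (hpos : ∀ t ∈ S, 0 < l t)
    (hgen : ∀ x : G, ∃ (n : ℕ) (f : Fin n → G), (∀ i, f i ∈ S) ∧ x = (List.ofFn f).prod)
    (x y : G) (hne : x ≠ y) :
    l (s 0) ≤ wordDist (↑S) l x y := by
  refine le_wd S l hgen x y _ (fun L hL hy => ?_)
  cases L with
  | nil => simp at hy; exact absurd hy.symm hne
  | cons t L' =>
    have ht : t ∈ S := hL t (by simp)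
    obtain ⟨j, hj, rfl⟩ := (henum t).1 ht
    have h0 : l (s 0) ≤ l (s j) := hmono 0 j (Nat.zero_le _) hj
    have hnn : 0 ≤ (L'.map l).sum := List.sum_nonneg fun a ha => by
      obtain ⟨u, hu, rfl⟩ := List.mem_map.1 ha
      exact (hpos u (hL u (List.mem_cons_of_mem _ hu))).le
    simp only [List.map_cons, List.sum_cons]
    linarith

private lemma wd_ge_of_not_mem (S : Finset G) (l : G → ℝ) (hpos : ∀ t ∈ S, 0 < l t)
    (hgen : ∀ x : G, ∃ (n : ℕ) (f : Fin n → G), (∀ i, f i ∈ S) ∧ x = (List.ofFn f).prod)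
    (H : Subgroup G) (c : ℝ) (hc : ∀ t ∈ S, t ∉ H → c ≤ l t) (x y : G)
    (hxy : x⁻¹ * y ∉ H) : c ≤ wordDist (↑S) l x y := by
  refine le_wd S l hgen x y _ (fun L hL hy => ?_)
  by_cases hall : ∀ t ∈ L, t ∈ H
  · exact absurd (by rw [hy]; simpa using H.list_prod_mem hall) hxy
  · push_neg at hall
    obtain ⟨t, htL, htH⟩ := hall
    have h1 : c ≤ l t := hc t (hL t htL) htH
    have h2 : l t ≤ (L.map l).sum := List.single_le_sum (fun a ha => by
        obtain ⟨u, hu, rfl⟩ := List.mem_map.1 ha; exact (hpos u (hL u hu)).le) _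
        (List.mem_map_of_mem (f := l) htL)
    linarith

private lemma closure_invol (a : G) (ha : a = a⁻¹) :
    ∀ g ∈ Subgroup.closure ({a} : Set G), g = 1 ∨ g = a := by
  have haa : a * a = 1 := by nth_rewrite 2 [ha]; simp
  intro g hg
  induction hg using Subgroup.closure_induction with
  | mem x hx => right; simpa using hx
  | one => left; rfl
  | mul x y hx hy ihx ihy =>
    rcases ihx with rfl | rfl <;> rcases ihy with rfl | rfl <;> simp [haa]
  | inv x hx ihx =>
    rcases ihx with rfl | rfl
    · left; simp
    · right; exact ha.symm

end WDHelperLemmas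

set_option maxHeartbeats 1600000 in
/-- for `A = {e, σ₁, σ₂, σ₃}` and any injective `φ : {1,2,3,4} → A`,
a tour `φ(1) → φ(2) → φ(3) → φ(4)` is at least `r₁` longer than `d(φ(1), φ(4))`. -/
theorem statement_7 {G : Type*} [Group G] [Infinite G]
    (S : Finset G) (l : G → ℝ) (r : ℕ) (hr : 3 ≤ r) (s : ℕ → G)
    (henum : ∀ x, x ∈ S ↔ ∃ i < r, s i = x)
    (hinj : ∀ i < r, ∀ j < r, s i = s j → i = j)
    (hmono : ∀ i j, i ≤ j → j < r → l (s i) ≤ l (s j))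
    (hone : (1 : G) ∉ S) (hsymm : ∀ t ∈ S, t⁻¹ ∈ S)
    (hlpos : ∀ t ∈ S, 0 < l t) (hlsymm : ∀ t ∈ S, l t⁻¹ = l t)
    (hgen : ∀ x : G, ∃ (n : ℕ) (f : Fin n → G), (∀ i, f i ∈ S) ∧ x = (List.ofFn f).prod)
    (hno2 : ∀ t ∈ S, ∀ t' ∈ S, t⁻¹ ∈ ({t, t'} : Set G) → t'⁻¹ ∈ ({t, t'} : Set G) →
      Subgroup.closure ({t, t'} : Set G) ≠ ⊤)
    (σ₁ σ₂ σ₃ : G)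
    (hcase : CaseI s r σ₁ σ₂ σ₃ ∨ CaseII s r σ₁ σ₂ σ₃ ∨ CaseIII s σ₁ σ₂ σ₃)
    :
    ∀ φ : Fin 4 → G, Function.Injective φ → (∀ i, φ i ∈ ({1, σ₁, σ₂, σ₃} : Set G)) →
      wordDist (↑S) l (φ 0) (φ 3) + l (s 0) ≤
        wordDist (↑S) l (φ 0) (φ 1) + wordDist (↑S) l (φ 1) (φ 2) +
          wordDist (↑S) l (φ 2) (φ 3) := by
  intro φ hphi hmem
  have hSmem : ∀ j, j < r → s j ∈ S := fun j hj => (henum _).2 ⟨j, hj, rfl⟩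
  have hne1 : ∀ j, j < r → s j ≠ 1 := fun j hj h => hone (h ▸ hSmem j hj)
  have h0r : 0 < r := by omega
  have h1r : 1 < r := by omega
  have tri := wd_triangle S l hlpos hgen
  have sym := wd_symm S l hlpos hgen hsymm hlsymm
  have hr1pos : 0 < l (s 0) := hlpos _ (hSmem 0 h0r)
  rcases hcase with hI | hII | hIII
  · -- Case I
    obtain ⟨hne0, rfl, rfl, i, hi1, hir, rfl, hnew, -⟩ := hI
    have hs0H : s 0 ∈ Subgroup.closure (s '' {j | j < i}) :=
      Subgroup.subset_closure (Set.mem_image_of_mem s (by simp only [Set.mem_setOf_eq]; omega))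
    have hs0iH : (s 0)⁻¹ ∈ Subgroup.closure (s '' {j | j < i}) :=
      (Subgroup.closure (s '' {j | j < i})).inv_mem hs0H
    have h1H : (1:G) ∈ Subgroup.closure (s '' {j | j < i}) :=
      (Subgroup.closure (s '' {j | j < i})).one_mem
    have huH : s i ∉ Subgroup.closure (s '' {j | j < i}) := hnew
    have hcH : ∀ t ∈ S, t ∉ Subgroup.closure (s '' {j | j < i}) → l (s i) ≤ l t := by
      intro t ht htH
      obtain ⟨j, hj, rfl⟩ := (henum t).1 ht
      rcases lt_or_ge j i with h | h
      · exact absurd (Subgroup.subset_closure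
          (Set.mem_image_of_mem s (by simp only [Set.mem_setOf_eq]; omega))) htH
      · exact hmono i j h hj
    have hnotH : ∀ x ∈ Subgroup.closure (s '' {j | j < i}),
        x⁻¹ * s i ∉ Subgroup.closure (s '' {j | j < i}) := fun x hx h =>
      huH (by simpa using (Subgroup.closure (s '' {j | j < i})).mul_mem hx h)
    have hnotH' : ∀ x ∈ Subgroup.closure (s '' {j | j < i}),
        (s i)⁻¹ * x ∉ Subgroup.closure (s '' {j | j < i}) := fun x hx h =>
      hnotH x hx (by simpa [mul_inv_rev] using (Subgroup.closure (s '' {j | j < i})).inv_mem h)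
    have hr1L : l (s 0) ≤ l (s i) := hmono 0 i (Nat.zero_le _) hir
    have ne01 : (1:G) ≠ s 0 := (hne1 0 h0r).symm
    have ne02 : (1:G) ≠ (s 0)⁻¹ := fun h => hne1 0 h0r (inv_eq_one.1 h.symm)
    have ub1 : wordDist (↑S) l 1 (s 0) ≤ l (s 0) := wd_le_single S l hlpos _ (hSmem 0 h0r)
    have ub2 : wordDist (↑S) l 1 ((s 0)⁻¹) ≤ l (s 0) := by
      have := wd_le_single S l hlpos _ (hsymm _ (hSmem 0 h0r))
      rwa [hlsymm _ (hSmem 0 h0r)] at this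
    have ub3 : wordDist (↑S) l 1 (s i) ≤ l (s i) := wd_le_single S l hlpos _ (hSmem i hir)
    have lbA : l (s 0) ≤ wordDist (↑S) l 1 (s 0) :=
      wd_ge_of_ne S l r s henum hmono hlpos hgen _ _ ne01
    have lbA' : l (s 0) ≤ wordDist (↑S) l (s 0) 1 :=
      wd_ge_of_ne S l r s henum hmono hlpos hgen _ _ ne01.symm
    have lbB : l (s 0) ≤ wordDist (↑S) l 1 ((s 0)⁻¹) :=
      wd_ge_of_ne S l r s henum hmono hlpos hgen _ _ ne02
    have lbB' : l (s 0) ≤ wordDist (↑S) l ((s 0)⁻¹) 1 :=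
      wd_ge_of_ne S l r s henum hmono hlpos hgen _ _ ne02.symm
    have lbC : l (s 0) ≤ wordDist (↑S) l (s 0) ((s 0)⁻¹) :=
      wd_ge_of_ne S l r s henum hmono hlpos hgen _ _ hne0
    have lbC' : l (s 0) ≤ wordDist (↑S) l ((s 0)⁻¹) (s 0) :=
      wd_ge_of_ne S l r s henum hmono hlpos hgen _ _ hne0.symm
    have lbU1 : l (s i) ≤ wordDist (↑S) l 1 (s i) :=
      wd_ge_of_not_mem S l hlpos hgen _ _ hcH _ _ (hnotH 1 h1H)
    have lbU1' : l (s i) ≤ wordDist (↑S) l (s i) 1 :=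
      wd_ge_of_not_mem S l hlpos hgen _ _ hcH _ _ (hnotH' 1 h1H)
    have lbU2 : l (s i) ≤ wordDist (↑S) l (s 0) (s i) :=
      wd_ge_of_not_mem S l hlpos hgen _ _ hcH _ _ (hnotH _ hs0H)
    have lbU2' : l (s i) ≤ wordDist (↑S) l (s i) (s 0) :=
      wd_ge_of_not_mem S l hlpos hgen _ _ hcH _ _ (hnotH' _ hs0H)
    have lbU3 : l (s i) ≤ wordDist (↑S) l ((s 0)⁻¹) (s i) :=
      wd_ge_of_not_mem S l hlpos hgen _ _ hcH _ _ (hnotH _ hs0iH)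
    have lbU3' : l (s i) ≤ wordDist (↑S) l (s i) ((s 0)⁻¹) :=
      wd_ge_of_not_mem S l hlpos hgen _ _ hcH _ _ (hnotH' _ hs0iH)
    have tri012 := tri ((1:G)) (s 0) ((s 0)⁻¹)
    have tri013 := tri ((1:G)) (s 0) (s i)
    have tri021 := tri ((1:G)) ((s 0)⁻¹) (s 0)
    have tri023 := tri ((1:G)) ((s 0)⁻¹) (s i)
    have tri031 := tri ((1:G)) (s i) (s 0)
    have tri032 := tri ((1:G)) (s i) ((s 0)⁻¹)
    have tri102 := tri (s 0) ((1:G)) ((s 0)⁻¹)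
    have tri103 := tri (s 0) ((1:G)) (s i)
    have tri120 := tri (s 0) ((s 0)⁻¹) ((1:G))
    have tri123 := tri (s 0) ((s 0)⁻¹) (s i)
    have tri130 := tri (s 0) (s i) ((1:G))
    have tri132 := tri (s 0) (s i) ((s 0)⁻¹)
    have tri201 := tri ((s 0)⁻¹) ((1:G)) (s 0)
    have tri203 := tri ((s 0)⁻¹) ((1:G)) (s i)
    have tri210 := tri ((s 0)⁻¹) (s 0) ((1:G))
    have tri213 := tri ((s 0)⁻¹) (s 0) (s i)
    have tri230 := tri ((s 0)⁻¹) (s i) ((1:G))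
    have tri231 := tri ((s 0)⁻¹) (s i) (s 0)
    have tri301 := tri (s i) ((1:G)) (s 0)
    have tri302 := tri (s i) ((1:G)) ((s 0)⁻¹)
    have tri310 := tri (s i) (s 0) ((1:G))
    have tri312 := tri (s i) (s 0) ((s 0)⁻¹)
    have tri320 := tri (s i) ((s 0)⁻¹) ((1:G))
    have tri321 := tri (s i) ((s 0)⁻¹) (s 0)
    have sym01 := sym ((1:G)) (s 0)
    have sym02 := sym ((1:G)) ((s 0)⁻¹)
    have sym03 := sym ((1:G)) (s i)
    have sym12 := sym (s 0) ((s 0)⁻¹)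
    have sym13 := sym (s 0) (s i)
    have sym23 := sym ((s 0)⁻¹) (s i)
    have h0 := hmem 0
    have h1 := hmem 1
    have h2 := hmem 2
    have h3 := hmem 3
    simp only [Set.mem_insert_iff, Set.mem_singleton_iff] at h0 h1 h2 h3
    have n01 : φ 0 ≠ φ 1 := fun h => absurd (hphi h) (by decide)
    have n02 : φ 0 ≠ φ 2 := fun h => absurd (hphi h) (by decide)
    have n03 : φ 0 ≠ φ 3 := fun h => absurd (hphi h) (by decide)
    have n12 : φ 1 ≠ φ 2 := fun h => absurd (hphi h) (by decide)
    have n13 : φ 1 ≠ φ 3 := fun h => absurd (hphi h) (by decide)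
    have n23 : φ 2 ≠ φ 3 := fun h => absurd (hphi h) (by decide)
    clear hphi hmem tri sym hSmem hne1 hgen hno2 henum hinj hmono hsymm hlpos hlsymm hone hr
    rcases h0 with h0|h0|h0|h0 <;> rcases h1 with h1|h1|h1|h1 <;>
      rcases h2 with h2|h2|h2|h2 <;> rcases h3 with h3|h3|h3|h3 <;>
      rw [h0, h1, h2, h3] <;>
      first
        | exact absurd (h0.trans h1.symm) n01
        | exact absurd (h0.trans h2.symm) n02
        | exact absurd (h0.trans h3.symm) n03
        | exact absurd (h1.trans h2.symm) n12
        | exact absurd (h1.trans h3.symm) n13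
        | exact absurd (h2.trans h3.symm) n23
        | linarith
  · -- Case II
    obtain ⟨hinv0, hinv1, rfl, rfl, i, hi2, hir, rfl, hnew, -⟩ := hII
    have hs0H : s 0 ∈ Subgroup.closure (s '' {j | j < i}) :=
      Subgroup.subset_closure (Set.mem_image_of_mem s (by simp only [Set.mem_setOf_eq]; omega))
    have hs1H : s 1 ∈ Subgroup.closure (s '' {j | j < i}) :=
      Subgroup.subset_closure (Set.mem_image_of_mem s (by simp only [Set.mem_setOf_eq]; omega))
    have h1H : (1:G) ∈ Subgroup.closure (s '' {j | j < i}) :=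
      (Subgroup.closure (s '' {j | j < i})).one_mem
    have huH : s i ∉ Subgroup.closure (s '' {j | j < i}) := hnew
    have hcH : ∀ t ∈ S, t ∉ Subgroup.closure (s '' {j | j < i}) → l (s i) ≤ l t := by
      intro t ht htH
      obtain ⟨j, hj, rfl⟩ := (henum t).1 ht
      rcases lt_or_ge j i with h | h
      · exact absurd (Subgroup.subset_closure
          (Set.mem_image_of_mem s (by simp only [Set.mem_setOf_eq]; omega))) htH
      · exact hmono i j h hj
    have hnotH : ∀ x ∈ Subgroup.closure (s '' {j | j < i}),
        x⁻¹ * s i ∉ Subgroup.closure (s '' {j | j < i}) := fun x hx h =>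
      huH (by simpa using (Subgroup.closure (s '' {j | j < i})).mul_mem hx h)
    have hnotH' : ∀ x ∈ Subgroup.closure (s '' {j | j < i}),
        (s i)⁻¹ * x ∉ Subgroup.closure (s '' {j | j < i}) := fun x hx h =>
      hnotH x hx (by simpa [mul_inv_rev] using (Subgroup.closure (s '' {j | j < i})).inv_mem h)
    have hC := closure_invol (s 0) hinv0
    have hcK : ∀ t ∈ S, t ∉ Subgroup.closure ({s 0} : Set G) → l (s 1) ≤ l t := by
      intro t ht htH
      obtain ⟨j, hj, rfl⟩ := (henum t).1 ht
      rcases Nat.eq_zero_or_pos j with rfl | hjpos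
      · exact absurd (Subgroup.subset_closure (Set.mem_singleton _)) htH
      · exact hmono 1 j (by omega) hj
    have hab : (s 0)⁻¹ * s 1 ∉ Subgroup.closure ({s 0} : Set G) := by
      intro h
      rcases hC _ h with h' | h'
      · have h01 : s 0 = s 1 := inv_mul_eq_one.1 h'
        have := hinj 0 (by omega) 1 (by omega) h01
        omega
      · have hs1 : s 1 = s 0 * s 0 := inv_mul_eq_iff_eq_mul.mp h'
        have h00 : s 0 * s 0 = 1 := by nth_rewrite 2 [hinv0]; simp
        exact hne1 1 h1r (by rw [hs1, h00])
    have hba : (s 1)⁻¹ * s 0 ∉ Subgroup.closure ({s 0} : Set G) := fun h =>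
      hab (by simpa [mul_inv_rev] using (Subgroup.closure ({s 0} : Set G)).inv_mem h)
    have hr12 : l (s 0) ≤ l (s 1) := hmono 0 1 (by omega) h1r
    have hr2L : l (s 1) ≤ l (s i) := hmono 1 i (by omega) hir
    have ne01 : (1:G) ≠ s 0 := (hne1 0 h0r).symm
    have ne0b : (1:G) ≠ s 1 := (hne1 1 h1r).symm
    have ub1 : wordDist (↑S) l 1 (s 0) ≤ l (s 0) := wd_le_single S l hlpos _ (hSmem 0 h0r)
    have ub2 : wordDist (↑S) l 1 (s 1) ≤ l (s 1) := wd_le_single S l hlpos _ (hSmem 1 h1r)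
    have ub3 : wordDist (↑S) l 1 (s i) ≤ l (s i) := wd_le_single S l hlpos _ (hSmem i hir)
    have lbA : l (s 0) ≤ wordDist (↑S) l 1 (s 0) :=
      wd_ge_of_ne S l r s henum hmono hlpos hgen _ _ ne01
    have lbA' : l (s 0) ≤ wordDist (↑S) l (s 0) 1 :=
      wd_ge_of_ne S l r s henum hmono hlpos hgen _ _ ne01.symm
    have lbB : l (s 0) ≤ wordDist (↑S) l 1 (s 1) :=
      wd_ge_of_ne S l r s henum hmono hlpos hgen _ _ ne0b
    have lbB' : l (s 0) ≤ wordDist (↑S) l (s 1) 1 :=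
      wd_ge_of_ne S l r s henum hmono hlpos hgen _ _ ne0b.symm
    have lbD : l (s 1) ≤ wordDist (↑S) l (s 0) (s 1) :=
      wd_ge_of_not_mem S l hlpos hgen _ _ hcK _ _ hab
    have lbD' : l (s 1) ≤ wordDist (↑S) l (s 1) (s 0) :=
      wd_ge_of_not_mem S l hlpos hgen _ _ hcK _ _ hba
    have lbU1 : l (s i) ≤ wordDist (↑S) l 1 (s i) :=
      wd_ge_of_not_mem S l hlpos hgen _ _ hcH _ _ (hnotH 1 h1H)
    have lbU1' : l (s i) ≤ wordDist (↑S) l (s i) 1 :=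
      wd_ge_of_not_mem S l hlpos hgen _ _ hcH _ _ (hnotH' 1 h1H)
    have lbU2 : l (s i) ≤ wordDist (↑S) l (s 0) (s i) :=
      wd_ge_of_not_mem S l hlpos hgen _ _ hcH _ _ (hnotH _ hs0H)
    have lbU2' : l (s i) ≤ wordDist (↑S) l (s i) (s 0) :=
      wd_ge_of_not_mem S l hlpos hgen _ _ hcH _ _ (hnotH' _ hs0H)
    have lbU3 : l (s i) ≤ wordDist (↑S) l (s 1) (s i) :=
      wd_ge_of_not_mem S l hlpos hgen _ _ hcH _ _ (hnotH _ hs1H)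
    have lbU3' : l (s i) ≤ wordDist (↑S) l (s i) (s 1) :=
      wd_ge_of_not_mem S l hlpos hgen _ _ hcH _ _ (hnotH' _ hs1H)
    have tri012 := tri ((1:G)) (s 0) (s 1)
    have tri013 := tri ((1:G)) (s 0) (s i)
    have tri021 := tri ((1:G)) (s 1) (s 0)
    have tri023 := tri ((1:G)) (s 1) (s i)
    have tri031 := tri ((1:G)) (s i) (s 0)
    have tri032 := tri ((1:G)) (s i) (s 1)
    have tri102 := tri (s 0) ((1:G)) (s 1)
    have tri103 := tri (s 0) ((1:G)) (s i)
    have tri120 := tri (s 0) (s 1) ((1:G))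
    have tri123 := tri (s 0) (s 1) (s i)
    have tri130 := tri (s 0) (s i) ((1:G))
    have tri132 := tri (s 0) (s i) (s 1)
    have tri201 := tri (s 1) ((1:G)) (s 0)
    have tri203 := tri (s 1) ((1:G)) (s i)
    have tri210 := tri (s 1) (s 0) ((1:G))
    have tri213 := tri (s 1) (s 0) (s i)
    have tri230 := tri (s 1) (s i) ((1:G))
    have tri231 := tri (s 1) (s i) (s 0)
    have tri301 := tri (s i) ((1:G)) (s 0)
    have tri302 := tri (s i) ((1:G)) (s 1)
    have tri310 := tri (s i) (s 0) ((1:G))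
    have tri312 := tri (s i) (s 0) (s 1)
    have tri320 := tri (s i) (s 1) ((1:G))
    have tri321 := tri (s i) (s 1) (s 0)
    have sym01 := sym ((1:G)) (s 0)
    have sym02 := sym ((1:G)) (s 1)
    have sym03 := sym ((1:G)) (s i)
    have sym12 := sym (s 0) (s 1)
    have sym13 := sym (s 0) (s i)
    have sym23 := sym (s 1) (s i)
    have h0 := hmem 0
    have h1 := hmem 1
    have h2 := hmem 2
    have h3 := hmem 3
    simp only [Set.mem_insert_iff, Set.mem_singleton_iff] at h0 h1 h2 h3
    have n01 : φ 0 ≠ φ 1 := fun h => absurd (hphi h) (by decide)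
    have n02 : φ 0 ≠ φ 2 := fun h => absurd (hphi h) (by decide)
    have n03 : φ 0 ≠ φ 3 := fun h => absurd (hphi h) (by decide)
    have n12 : φ 1 ≠ φ 2 := fun h => absurd (hphi h) (by decide)
    have n13 : φ 1 ≠ φ 3 := fun h => absurd (hphi h) (by decide)
    have n23 : φ 2 ≠ φ 3 := fun h => absurd (hphi h) (by decide)
    clear hphi hmem tri sym hSmem hne1 hgen hno2 henum hinj hmono hsymm hlpos hlsymm hone hr
    rcases h0 with h0|h0|h0|h0 <;> rcases h1 with h1|h1|h1|h1 <;>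
      rcases h2 with h2|h2|h2|h2 <;> rcases h3 with h3|h3|h3|h3 <;>
      rw [h0, h1, h2, h3] <;>
      first
        | exact absurd (h0.trans h1.symm) n01
        | exact absurd (h0.trans h2.symm) n02
        | exact absurd (h0.trans h3.symm) n03
        | exact absurd (h1.trans h2.symm) n12
        | exact absurd (h1.trans h3.symm) n13
        | exact absurd (h2.trans h3.symm) n23
        | linarith
  · -- Case III
    obtain ⟨hinv0, hnc, rfl, rfl, rfl⟩ := hIII
    have hC := closure_invol (s 0) hinv0
    have h00 : s 0 * s 0 = 1 := by nth_rewrite 2 [hinv0]; simp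
    have hcK : ∀ t ∈ S, t ∉ Subgroup.closure ({s 0} : Set G) → l (s 1) ≤ l t := by
      intro t ht htH
      obtain ⟨j, hj, rfl⟩ := (henum t).1 ht
      rcases Nat.eq_zero_or_pos j with rfl | hjpos
      · exact absurd (Subgroup.subset_closure (Set.mem_singleton _)) htH
      · exact hmono 1 j (by omega) hj
    have hab : (s 0)⁻¹ * s 1 ∉ Subgroup.closure ({s 0} : Set G) := by
      intro h
      rcases hC _ h with h' | h'
      · have h01 : s 0 = s 1 := inv_mul_eq_one.1 h'
        have := hinj 0 (by omega) 1 (by omega) h01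
        omega
      · have hs1 : s 1 = s 0 * s 0 := inv_mul_eq_iff_eq_mul.mp h'
        exact hne1 1 h1r (by rw [hs1, h00])
    have hba : (s 1)⁻¹ * s 0 ∉ Subgroup.closure ({s 0} : Set G) := fun h =>
      hab (by simpa [mul_inv_rev] using (Subgroup.closure ({s 0} : Set G)).inv_mem h)
    have hab' : (s 0)⁻¹ * (s 1)⁻¹ ∉ Subgroup.closure ({s 0} : Set G) := by
      intro h
      rcases hC _ h with h' | h'
      · have h01 : s 0 = (s 1)⁻¹ := inv_mul_eq_one.1 h'
        have h10 : s 1 = (s 0)⁻¹ := by rw [h01]; simp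
        have hss : s 1 = s 0 := by rw [h10, ← hinv0]
        have := hinj 1 (by omega) 0 (by omega) hss
        omega
      · have hs1 : (s 1)⁻¹ = s 0 * s 0 := inv_mul_eq_iff_eq_mul.mp h'
        have h1' : (s 1)⁻¹ = 1 := by rw [hs1, h00]
        exact hne1 1 h1r (inv_eq_one.1 h1')
    have hba' : ((s 1)⁻¹)⁻¹ * s 0 ∉ Subgroup.closure ({s 0} : Set G) := fun h =>
      hab' (by simpa [mul_inv_rev] using (Subgroup.closure ({s 0} : Set G)).inv_mem h)
    have hr12 : l (s 0) ≤ l (s 1) := hmono 0 1 (by omega) h1r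
    have ne01 : (1:G) ≠ s 0 := (hne1 0 h0r).symm
    have ne0b : (1:G) ≠ s 1 := (hne1 1 h1r).symm
    have ne0c : (1:G) ≠ (s 1)⁻¹ := fun h => hne1 1 h1r (inv_eq_one.1 h.symm)
    have ub1 : wordDist (↑S) l 1 (s 0) ≤ l (s 0) := wd_le_single S l hlpos _ (hSmem 0 h0r)
    have ub2 : wordDist (↑S) l 1 (s 1) ≤ l (s 1) := wd_le_single S l hlpos _ (hSmem 1 h1r)
    have ub3 : wordDist (↑S) l 1 ((s 1)⁻¹) ≤ l (s 1) := by
      have := wd_le_single S l hlpos _ (hsymm _ (hSmem 1 h1r))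
      rwa [hlsymm _ (hSmem 1 h1r)] at this
    have heq : wordDist (↑S) l 1 ((s 1)⁻¹) = wordDist (↑S) l 1 (s 1) :=
      wd_inv S l hlpos hgen hsymm hlsymm (s 1)
    have lbA : l (s 0) ≤ wordDist (↑S) l 1 (s 0) :=
      wd_ge_of_ne S l r s henum hmono hlpos hgen _ _ ne01
    have lbA' : l (s 0) ≤ wordDist (↑S) l (s 0) 1 :=
      wd_ge_of_ne S l r s henum hmono hlpos hgen _ _ ne01.symm
    have lbB : l (s 0) ≤ wordDist (↑S) l 1 (s 1) :=
      wd_ge_of_ne S l r s henum hmono hlpos hgen _ _ ne0b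
    have lbB' : l (s 0) ≤ wordDist (↑S) l (s 1) 1 :=
      wd_ge_of_ne S l r s henum hmono hlpos hgen _ _ ne0b.symm
    have lbC : l (s 0) ≤ wordDist (↑S) l 1 ((s 1)⁻¹) :=
      wd_ge_of_ne S l r s henum hmono hlpos hgen _ _ ne0c
    have lbC' : l (s 0) ≤ wordDist (↑S) l ((s 1)⁻¹) 1 :=
      wd_ge_of_ne S l r s henum hmono hlpos hgen _ _ ne0c.symm
    have lbq : l (s 0) ≤ wordDist (↑S) l (s 1) ((s 1)⁻¹) :=
      wd_ge_of_ne S l r s henum hmono hlpos hgen _ _ hnc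
    have lbq' : l (s 0) ≤ wordDist (↑S) l ((s 1)⁻¹) (s 1) :=
      wd_ge_of_ne S l r s henum hmono hlpos hgen _ _ (Ne.symm hnc)
    have lbD : l (s 1) ≤ wordDist (↑S) l (s 0) (s 1) :=
      wd_ge_of_not_mem S l hlpos hgen _ _ hcK _ _ hab
    have lbD' : l (s 1) ≤ wordDist (↑S) l (s 1) (s 0) :=
      wd_ge_of_not_mem S l hlpos hgen _ _ hcK _ _ hba
    have lbE : l (s 1) ≤ wordDist (↑S) l (s 0) ((s 1)⁻¹) :=
      wd_ge_of_not_mem S l hlpos hgen _ _ hcK _ _ hab'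
    have lbE' : l (s 1) ≤ wordDist (↑S) l ((s 1)⁻¹) (s 0) :=
      wd_ge_of_not_mem S l hlpos hgen _ _ hcK _ _ hba'
    have tri012 := tri ((1:G)) (s 0) (s 1)
    have tri013 := tri ((1:G)) (s 0) ((s 1)⁻¹)
    have tri021 := tri ((1:G)) (s 1) (s 0)
    have tri023 := tri ((1:G)) (s 1) ((s 1)⁻¹)
    have tri031 := tri ((1:G)) ((s 1)⁻¹) (s 0)
    have tri032 := tri ((1:G)) ((s 1)⁻¹) (s 1)
    have tri102 := tri (s 0) ((1:G)) (s 1)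
    have tri103 := tri (s 0) ((1:G)) ((s 1)⁻¹)
    have tri120 := tri (s 0) (s 1) ((1:G))
    have tri123 := tri (s 0) (s 1) ((s 1)⁻¹)
    have tri130 := tri (s 0) ((s 1)⁻¹) ((1:G))
    have tri132 := tri (s 0) ((s 1)⁻¹) (s 1)
    have tri201 := tri (s 1) ((1:G)) (s 0)
    have tri203 := tri (s 1) ((1:G)) ((s 1)⁻¹)
    have tri210 := tri (s 1) (s 0) ((1:G))
    have tri213 := tri (s 1) (s 0) ((s 1)⁻¹)
    have tri230 := tri (s 1) ((s 1)⁻¹) ((1:G))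
    have tri231 := tri (s 1) ((s 1)⁻¹) (s 0)
    have tri301 := tri ((s 1)⁻¹) ((1:G)) (s 0)
    have tri302 := tri ((s 1)⁻¹) ((1:G)) (s 1)
    have tri310 := tri ((s 1)⁻¹) (s 0) ((1:G))
    have tri312 := tri ((s 1)⁻¹) (s 0) (s 1)
    have tri320 := tri ((s 1)⁻¹) (s 1) ((1:G))
    have tri321 := tri ((s 1)⁻¹) (s 1) (s 0)
    have sym01 := sym ((1:G)) (s 0)
    have sym02 := sym ((1:G)) (s 1)
    have sym03 := sym ((1:G)) ((s 1)⁻¹)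
    have sym12 := sym (s 0) (s 1)
    have sym13 := sym (s 0) ((s 1)⁻¹)
    have sym23 := sym (s 1) ((s 1)⁻¹)
    have h0 := hmem 0
    have h1 := hmem 1
    have h2 := hmem 2
    have h3 := hmem 3
    simp only [Set.mem_insert_iff, Set.mem_singleton_iff] at h0 h1 h2 h3
    have n01 : φ 0 ≠ φ 1 := fun h => absurd (hphi h) (by decide)
    have n02 : φ 0 ≠ φ 2 := fun h => absurd (hphi h) (by decide)
    have n03 : φ 0 ≠ φ 3 := fun h => absurd (hphi h) (by decide)
    have n12 : φ 1 ≠ φ 2 := fun h => absurd (hphi h) (by decide)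
    have n13 : φ 1 ≠ φ 3 := fun h => absurd (hphi h) (by decide)
    have n23 : φ 2 ≠ φ 3 := fun h => absurd (hphi h) (by decide)
    clear hphi hmem tri sym hSmem hne1 hgen hno2 henum hinj hmono hsymm hlpos hlsymm hone hr
    rcases h0 with h0|h0|h0|h0 <;> rcases h1 with h1|h1|h1|h1 <;>
      rcases h2 with h2|h2|h2|h2 <;> rcases h3 with h3|h3|h3|h3 <;>
      rw [h0, h1, h2, h3] <;>
      first
        | exact absurd (h0.trans h1.symm) n01
        | exact absurd (h0.trans h2.symm) n02
        | exact absurd (h0.trans h3.symm) n03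
        | exact absurd (h1.trans h2.symm) n12
        | exact absurd (h1.trans h3.symm) n13
        | exact absurd (h2.trans h3.symm) n23
        | linarith
end

section
/- For every y ∈ G and every x ∈ G ∖ B_y, where B_y := {y, yσ₁, yσ₂, yσ₃}, one has d_TS(𝟙_y ⊕ 𝟙_{yσ₁} ⊕ 𝟙_{yσ₂} ⊕ 𝟙_{yσ₃}, x) ≥ d(e,x) + r₁; that is, any tour from e to x visiting all four points y, yσ₁, yσ₂, yσ₃ is at least r₁ longer than the distance from e to x. -/
open MeasureTheory Filter ProbabilityTheory Topology
open scoped ENNReal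

namespace WDAux

variable {G : Type*} [Group G]

def WSet (S : Set G) (l : G → ℝ) (x y : G) : Set ℝ :=
  {r | ∃ (n : ℕ) (f : Fin n → G), (∀ i, f i ∈ S) ∧ y = x * (List.ofFn f).prod ∧
    r = ∑ i, l (f i)}

lemma wordDist_eq (S : Set G) (l : G → ℝ) (x y : G) :
    wordDist S l x y = sInf (WSet S l x y) := rfl

lemma mem_WSet_iff {S : Set G} {l : G → ℝ} {x y : G} {t : ℝ} :
    t ∈ WSet S l x y ↔
      ∃ L : List G, (∀ u ∈ L, u ∈ S) ∧ y = x * L.prod ∧ t = (L.map l).sum := by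
  constructor
  · rintro ⟨n, f, hf, hy, ht⟩
    refine ⟨List.ofFn f, ?_, hy, ?_⟩
    · intro u hu
      rw [List.mem_ofFn] at hu
      obtain ⟨i, rfl⟩ := hu
      exact hf i
    · rw [List.map_ofFn, List.sum_ofFn]; exact ht
  · rintro ⟨L, hL, hy, ht⟩
    refine ⟨L.length, L.get, fun i => hL _ (L.get_mem ..), by rwa [List.ofFn_get], ?_⟩
    rw [ht]
    conv_lhs => rw [← List.ofFn_get L]
    rw [List.map_ofFn, List.sum_ofFn]; rfl

variable {S : Set G} {l : G → ℝ}

lemma WSet_nonneg (hlpos : ∀ u ∈ S, 0 < l u) {x y : G} {t : ℝ} (ht : t ∈ WSet S l x y) :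
    0 ≤ t := by
  rw [mem_WSet_iff] at ht
  obtain ⟨L, hL, -, rfl⟩ := ht
  refine List.sum_nonneg ?_
  intro a ha
  rw [List.mem_map] at ha
  obtain ⟨u, hu, rfl⟩ := ha
  exact (hlpos u (hL u hu)).le

lemma WSet_bddBelow (hlpos : ∀ u ∈ S, 0 < l u) (x y : G) : BddBelow (WSet S l x y) :=
  ⟨0, fun _ ht => WSet_nonneg hlpos ht⟩

lemma WSet_nonempty (hgen : ∀ g : G, ∃ (n : ℕ) (f : Fin n → G),
      (∀ i, f i ∈ S) ∧ g = (List.ofFn f).prod) (x y : G) :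
    (WSet S l x y).Nonempty := by
  obtain ⟨n, f, hf, hprod⟩ := hgen (x⁻¹ * y)
  exact ⟨∑ i, l (f i), n, f, hf, by rw [← hprod, mul_inv_cancel_left], rfl⟩

lemma wordDist_nonneg (hlpos : ∀ u ∈ S, 0 < l u) (x y : G) : 0 ≤ wordDist S l x y :=
  Real.sInf_nonneg (fun _ ht => WSet_nonneg hlpos ht)

lemma wordDist_le_of_word (hlpos : ∀ u ∈ S, 0 < l u) {x y : G} (L : List G)
    (hL : ∀ u ∈ L, u ∈ S) (hy : y = x * L.prod) :
    wordDist S l x y ≤ (L.map l).sum :=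
  csInf_le (WSet_bddBelow hlpos x y) (mem_WSet_iff.mpr ⟨L, hL, hy, rfl⟩)

lemma wordDist_self (hlpos : ∀ u ∈ S, 0 < l u) (x : G) : wordDist S l x x = 0 := by
  refine le_antisymm ?_ (wordDist_nonneg hlpos x x)
  simpa using wordDist_le_of_word hlpos ([] : List G) (by simp) (by simp)

lemma wordDist_le_single (hlpos : ∀ u ∈ S, 0 < l u) {u : G} (hu : u ∈ S) (x : G) :
    wordDist S l x (x * u) ≤ l u := by
  simpa using wordDist_le_of_word hlpos ([u]) (by simpa) (by simp)

lemma le_wordDist (hgen : ∀ g : G, ∃ (n : ℕ) (f : Fin n → G),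
      (∀ i, f i ∈ S) ∧ g = (List.ofFn f).prod) {x y : G} {c : ℝ}
    (h : ∀ t ∈ WSet S l x y, c ≤ t) : c ≤ wordDist S l x y :=
  le_csInf (WSet_nonempty hgen x y) h

lemma wordDist_triangle (hlpos : ∀ u ∈ S, 0 < l u)
    (hgen : ∀ g : G, ∃ (n : ℕ) (f : Fin n → G),
      (∀ i, f i ∈ S) ∧ g = (List.ofFn f).prod) (x y z : G) :
    wordDist S l x z ≤ wordDist S l x y + wordDist S l y z := by
  have key : ∀ a ∈ WSet S l x y, ∀ b ∈ WSet S l y z, wordDist S l x z ≤ a + b := by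
    intro a ha b hb
    rw [mem_WSet_iff] at ha hb
    obtain ⟨L₁, hL₁, hy₁, rfl⟩ := ha
    obtain ⟨L₂, hL₂, hy₂, rfl⟩ := hb
    have := wordDist_le_of_word (x := x) (y := z) hlpos (L₁ ++ L₂)
      (fun u hu => ((List.mem_append.mp hu).elim (hL₁ u) (hL₂ u)))
      (by rw [List.prod_append, ← mul_assoc, ← hy₁, ← hy₂])
    simpa using this
  have h1 : ∀ b ∈ WSet S l y z, wordDist S l x z - b ≤ wordDist S l x y := by
    intro b hb
    exact le_csInf (WSet_nonempty hgen x y)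
      (fun a ha => sub_le_iff_le_add.mpr (key a ha b hb))
  have h2 : wordDist S l x z - wordDist S l x y ≤ wordDist S l y z :=
    le_csInf (WSet_nonempty hgen y z)
      (fun b hb => sub_le_iff_le_add.mpr (by linarith [h1 b hb]))
  linarith

lemma WSet_mul (g x y : G) : WSet S l (g * x) (g * y) = WSet S l x y := by
  ext t
  simp only [mem_WSet_iff]
  constructor <;>
    · rintro ⟨L, hL, hy, rfl⟩
      refine ⟨L, hL, ?_, rfl⟩
      · first
        | (rw [mul_assoc] at hy; exact mul_left_cancel hy)
        | (rw [hy, mul_assoc])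

lemma wordDist_mul_left (g x y : G) :
    wordDist S l (g * x) (g * y) = wordDist S l x y := by
  rw [wordDist_eq, wordDist_eq, WSet_mul]

lemma wordDist_symm (hsymm : ∀ u ∈ S, u⁻¹ ∈ S) (hlsymm : ∀ u ∈ S, l u⁻¹ = l u)
    (x y : G) : wordDist S l x y = wordDist S l y x := by
  have key : ∀ x y : G, WSet S l x y ⊆ WSet S l y x := by
    intro x y t ht
    rw [mem_WSet_iff] at ht ⊢
    obtain ⟨L, hL, hy, rfl⟩ := ht
    refine ⟨(L.map (·⁻¹)).reverse, ?_, ?_, ?_⟩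
    · intro u hu
      rw [List.mem_reverse, List.mem_map] at hu
      obtain ⟨v, hv, rfl⟩ := hu
      exact hsymm v (hL v hv)
    · rw [← List.prod_inv_reverse, hy, mul_inv_cancel_right]
    · rw [List.map_reverse, List.sum_reverse, List.map_map]
      congr 1
      refine List.map_congr_left ?_
      intro u hu
      exact (hlsymm u (hL u hu)).symm
  rw [wordDist_eq, wordDist_eq]
  rw [Set.Subset.antisymm (key x y) (key y x)]


lemma wordDist_ge_min (hlpos : ∀ u ∈ S, 0 < l u)
    (hgen : ∀ g : G, ∃ (n : ℕ) (f : Fin n → G),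
      (∀ i, f i ∈ S) ∧ g = (List.ofFn f).prod)
    {c : ℝ} (hcl : ∀ u ∈ S, c ≤ l u) {x y : G} (hxy : x ≠ y) :
    c ≤ wordDist S l x y := by
  refine le_wordDist hgen ?_
  intro t ht
  rw [mem_WSet_iff] at ht
  obtain ⟨L, hL, hy, rfl⟩ := ht
  match L, hL, hy with
  | [], _, hy => exact absurd (by simpa using hy.symm) hxy
  | u :: L', hL, hy =>
    have h1 : c ≤ l u := hcl u (hL u (by simp))
    have h2 : 0 ≤ (L'.map l).sum := by
      refine List.sum_nonneg ?_
      intro a ha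
      rw [List.mem_map] at ha
      obtain ⟨v, hv, rfl⟩ := ha
      exact (hlpos v (hL v (by simp [hv]))).le
    simp only [List.map_cons, List.sum_cons]
    linarith

lemma wordDist_subgroup_le (hlpos : ∀ u ∈ S, 0 < l u)
    (hgen : ∀ g : G, ∃ (n : ℕ) (f : Fin n → G),
      (∀ i, f i ∈ S) ∧ g = (List.ofFn f).prod)
    (H : Subgroup G) {c : ℝ}
    (hc : ∀ u ∈ S, u ∉ H → c ≤ l u) {x y : G} (hxy : x⁻¹ * y ∉ H) :
    c ≤ wordDist S l x y := by
  refine le_wordDist hgen ?_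
  intro t ht
  rw [mem_WSet_iff] at ht
  obtain ⟨L, hL, hy, rfl⟩ := ht
  have hP : L.prod ∉ H := by
    rw [hy, inv_mul_cancel_left] at hxy
    exact hxy
  have : ∃ u ∈ L, u ∉ H := by
    by_contra h
    push_neg at h
    exact hP (Subgroup.list_prod_mem H h)
  obtain ⟨u, huL, huH⟩ := this
  have h1 : c ≤ l u := hc u (hL u huL) huH
  have h2 : l u ≤ (L.map l).sum := by
    refine List.single_le_sum ?_ _ (List.mem_map_of_mem (f := l) huL)
    intro a ha
    rw [List.mem_map] at ha
    obtain ⟨v, hv, rfl⟩ := ha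
    exact (hlpos v (hL v hv)).le
  linarith

lemma mem_closure_invol {a g : G} (ha : a * a = 1) (hg : g ∈ Subgroup.closure ({a} : Set G)) :
    g = 1 ∨ g = a := by
  rw [Subgroup.mem_closure_singleton] at hg
  obtain ⟨n, rfl⟩ := hg
  have h2 : a ^ (2 : ℤ) = 1 := by
    rw [show (2:ℤ) = (2:ℕ) by norm_num, zpow_natCast, pow_two, ha]
  rcases Int.even_or_odd n with ⟨k, rfl⟩ | ⟨k, rfl⟩
  · left
    rw [show k + k = 2 * k by ring, zpow_mul, h2, one_zpow]
  · right
    rw [zpow_add, show 2 * k = k * 2 by ring, zpow_mul, show ((a^k)^(2:ℤ) : G) = ((a^(2:ℤ))^k : G) by rw [← zpow_mul, ← zpow_mul, mul_comm], h2, one_zpow, one_mul, zpow_one]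


end WDAux

namespace WDAux
variable {G : Type*} [Group G]

lemma all_in_closure_I {s : ℕ → G} {i : ℕ}
    (hmin : ∀ k, 1 ≤ k → k < i → ¬ newGen s k) :
    ∀ k, k < i → s k ∈ Subgroup.closure ({s 0} : Set G) := by
  intro k
  induction k using Nat.strong_induction_on with
  | _ k IH =>
    intro hk
    rcases Nat.eq_zero_or_pos k with rfl | hk1
    · exact Subgroup.subset_closure (Set.mem_singleton _)
    · have h := hmin k hk1 hk
      rw [newGen, not_not] at h
      refine (Subgroup.closure_le (Subgroup.closure ({s 0} : Set G))).mpr ?_ h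
      rintro _ ⟨j, hj, rfl⟩
      exact IH j hj (lt_trans hj hk)

lemma all_in_closure_II {s : ℕ → G} {i : ℕ}
    (hmin : ∀ k, 2 ≤ k → k < i → ¬ newGen s k) :
    ∀ k, k < i → s k ∈ Subgroup.closure ({s 0, s 1} : Set G) := by
  intro k
  induction k using Nat.strong_induction_on with
  | _ k IH =>
    intro hk
    match k, hk with
    | 0, _ => exact Subgroup.subset_closure (by simp)
    | 1, _ => exact Subgroup.subset_closure (by simp)
    | (m+2), hk =>
      have h := hmin (m+2) (by omega) hk
      rw [newGen, not_not] at h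
      refine (Subgroup.closure_le (Subgroup.closure ({s 0, s 1} : Set G))).mpr ?_ h
      rintro _ ⟨j, hj, rfl⟩
      exact IH j hj (lt_trans hj hk)

end WDAux


namespace WDAux
set_option maxHeartbeats 2000000 in
lemma star {α : Type*} (d : α → α → ℝ)
    (hsy : ∀ u v : α, d u v = d v u)
    (P0 P1 P2 P3 : α) (ρ m2 m3 : ℝ)
    (hρ2 : ρ ≤ m2) (h23 : m2 ≤ m3)
    (u01 : d P0 P1 ≤ ρ) (l01 : ρ ≤ d P0 P1)
    (u02 : d P0 P2 ≤ m2) (l02 : m2 ≤ d P0 P2)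
    (u03 : d P0 P3 ≤ m3) (l03 : m3 ≤ d P0 P3)
    (l12 : m2 ≤ d P1 P2) (l13 : m3 ≤ d P1 P3) (l23 : ρ ≤ d P2 P3)
    (t12 : d P1 P2 ≤ d P1 P0 + d P0 P2)
    (t13 : d P1 P3 ≤ d P1 P0 + d P0 P3)
    (t23 : d P2 P3 ≤ d P2 P0 + d P0 P3)
    (hdisj : m3 ≤ d P2 P3 ∨ m3 ≤ m2)
    {w1 w2 w3 w4 : α}
    (h1 : w1 = P0 ∨ w1 = P1 ∨ w1 = P2 ∨ w1 = P3)
    (h2 : w2 = P0 ∨ w2 = P1 ∨ w2 = P2 ∨ w2 = P3)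
    (h3 : w3 = P0 ∨ w3 = P1 ∨ w3 = P2 ∨ w3 = P3)
    (h4 : w4 = P0 ∨ w4 = P1 ∨ w4 = P2 ∨ w4 = P3)
    (n12 : w1 ≠ w2) (n13 : w1 ≠ w3) (n14 : w1 ≠ w4)
    (n23 : w2 ≠ w3) (n24 : w2 ≠ w4) (n34 : w3 ≠ w4) :
    d w1 w4 + ρ ≤ d w1 w2 + d w2 w3 + d w3 w4 := by
  rcases hdisj with hd | hd <;>
  obtain rfl|rfl|rfl|rfl := h1 <;> obtain rfl|rfl|rfl|rfl := h2 <;>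
  obtain rfl|rfl|rfl|rfl := h3 <;> obtain rfl|rfl|rfl|rfl := h4 <;>
    first
      | exact absurd rfl n12
      | exact absurd rfl n13
      | exact absurd rfl n14
      | exact absurd rfl n23
      | exact absurd rfl n24
      | exact absurd rfl n34
      | linarith [hsy w1 w2, hsy w1 w3, hsy w1 w4, hsy w2 w3, hsy w2 w4, hsy w3 w4]
end WDAux

namespace WDAux
section Kit
variable {G : Type*} [Group G]

variable {S : Finset G} {l : G → ℝ} {r : ℕ} {s : ℕ → G} {σ₁ σ₂ σ₃ : G}

lemma kit (hr : 3 ≤ r)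
    (henum : ∀ x, x ∈ S ↔ ∃ i < r, s i = x)
    (hinj : ∀ i < r, ∀ j < r, s i = s j → i = j)
    (hmono : ∀ i j, i ≤ j → j < r → l (s i) ≤ l (s j))
    (hone : (1 : G) ∉ S) (hsymm : ∀ t ∈ S, t⁻¹ ∈ S)
    (hlpos : ∀ t ∈ S, 0 < l t) (hlsymm : ∀ t ∈ S, l t⁻¹ = l t)
    (hgen : ∀ x : G, ∃ (n : ℕ) (f : Fin n → G), (∀ i, f i ∈ S) ∧ x = (List.ofFn f).prod)
    (hcase : CaseI s r σ₁ σ₂ σ₃ ∨ CaseII s r σ₁ σ₂ σ₃ ∨ CaseIII s σ₁ σ₂ σ₃) :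
    (σ₁ ∈ S ∧ σ₂ ∈ S ∧ σ₃ ∈ S) ∧
    ((1:G) ≠ σ₁ ∧ (1:G) ≠ σ₂ ∧ (1:G) ≠ σ₃ ∧ σ₁ ≠ σ₂ ∧ σ₁ ≠ σ₃ ∧ σ₂ ≠ σ₃) ∧
    ∃ m2 m3 : ℝ,
      l (s 0) ≤ m2 ∧ m2 ≤ m3 ∧
      wordDist (↑S) l 1 σ₁ ≤ l (s 0) ∧ l (s 0) ≤ wordDist (↑S) l 1 σ₁ ∧
      wordDist (↑S) l 1 σ₂ ≤ m2 ∧ m2 ≤ wordDist (↑S) l 1 σ₂ ∧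
      wordDist (↑S) l 1 σ₃ ≤ m3 ∧ m3 ≤ wordDist (↑S) l 1 σ₃ ∧
      m2 ≤ wordDist (↑S) l σ₁ σ₂ ∧ m3 ≤ wordDist (↑S) l σ₁ σ₃ ∧
      l (s 0) ≤ wordDist (↑S) l σ₂ σ₃ ∧
      (m3 ≤ wordDist (↑S) l σ₂ σ₃ ∨ m3 ≤ m2) := by
  have hlpos' : ∀ u ∈ (↑S : Set G), 0 < l u := fun u hu => hlpos u hu
  have hsmem : ∀ k, k < r → s k ∈ (↑S : Set G) := fun k hk => by
    simpa using (henum (s k)).mpr ⟨k, hk, rfl⟩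
  have h0r : (0:ℕ) < r := by omega
  have h1r : (1:ℕ) < r := by omega
  have hS0 : s 0 ∈ (↑S : Set G) := hsmem 0 h0r
  have hS1 : s 1 ∈ (↑S : Set G) := hsmem 1 h1r
  have lmin : ∀ u ∈ (↑S : Set G), l (s 0) ≤ l u := by
    intro u hu
    obtain ⟨k, hk, rfl⟩ := (henum u).mp hu
    exact hmono 0 k (Nat.zero_le k) hk
  have dmin : ∀ u v : G, u ≠ v → l (s 0) ≤ wordDist (↑S) l u v := fun u v huv =>
    wordDist_ge_min hlpos' hgen lmin huv
  have done_le : ∀ u ∈ (↑S : Set G), wordDist (↑S) l 1 u ≤ l u := fun u hu => by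
    simpa using wordDist_le_single hlpos' hu 1
  have hne1 : ∀ u ∈ (↑S : Set G), (1:G) ≠ u := by
    rintro u hu rfl; exact hone hu
  rcases hcase with ⟨hc1, hσ1, hσ2, i, hi1, hir, hσ3, hnew, hmin⟩ |
      ⟨hc1, hc2, hσ1, hσ2, i, hi2, hir, hσ3, hnew, hmin⟩ |
      ⟨hc1, hc2, hσ1, hσ2, hσ3⟩
  · -- Case I
    subst hσ1 hσ2 hσ3
    have hSi : s i ∈ (↑S : Set G) := hsmem i hir
    have hSinv : (s 0)⁻¹ ∈ (↑S : Set G) := by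
      simpa using hsymm (s 0) hS0
    set H : Subgroup G := Subgroup.closure {s 0} with hH
    have h0H : s 0 ∈ H := Subgroup.subset_closure (Set.mem_singleton _)
    have hiH : s i ∉ H := by
      intro hmem
      refine hnew ?_
      have hsub : H ≤ Subgroup.closure (s '' {j | j < i}) := by
        apply Subgroup.closure_mono
        rintro _ rfl
        exact ⟨0, by simpa using Nat.lt_of_lt_of_le Nat.zero_lt_one hi1, rfl⟩
      exact hsub hmem
    have hcΛ : ∀ u ∈ (↑S : Set G), u ∉ H → l (s i) ≤ l u := by
      intro u hu huH
      obtain ⟨k, hk, rfl⟩ := (henum u).mp hu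
      by_cases hki : k < i
      · exact absurd (all_in_closure_I hmin k hki) huH
      · exact hmono i k (by omega) hk
    have dsub : ∀ u v : G, u⁻¹ * v ∉ H → l (s i) ≤ wordDist (↑S) l u v :=
      fun u v h => wordDist_subgroup_le hlpos' hgen H hcΛ h
    have hn13 : (s 0)⁻¹ * s i ∉ H := by
      intro h
      exact hiH (by simpa using H.mul_mem h0H h)
    have hn23 : ((s 0)⁻¹)⁻¹ * s i ∉ H := by
      intro h
      rw [inv_inv] at h
      exact hiH (by simpa using H.mul_mem (H.inv_mem h0H) h)
    have hn03 : (1:G)⁻¹ * s i ∉ H := by simpa using hiH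
    refine ⟨⟨by simpa using hS0, by simpa using hSinv, by simpa using hSi⟩,
      ⟨hne1 _ hS0, hne1 _ hSinv, hne1 _ hSi, hc1, ?_, ?_⟩,
      l (s 0), l (s i), le_refl _, hmono 0 i (by omega) hir,
      done_le _ hS0, dmin _ _ (hne1 _ hS0),
      le_trans (done_le _ hSinv) (by rw [hlsymm _ hS0]), dmin _ _ (hne1 _ hSinv),
      done_le _ hSi, by simpa using dsub 1 (s i) hn03,
      dmin _ _ hc1, dsub _ _ hn13, dmin _ _ ?_, Or.inl (dsub _ _ hn23)⟩
    · intro h; exact hiH (h ▸ h0H)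
    · intro h; exact hiH (h ▸ H.inv_mem h0H)
    · intro h; exact hiH (h ▸ H.inv_mem h0H)
  · -- Case II
    subst hσ1 hσ2 hσ3
    have hSi : s i ∈ (↑S : Set G) := hsmem i hir
    have h00 : s 0 * s 0 = 1 := by
      nth_rewrite 2 [hc1]
      exact mul_inv_cancel (s 0)
    have h11 : s 1 * s 1 = 1 := by
      nth_rewrite 2 [hc2]
      exact mul_inv_cancel (s 1)
    have hne01 : s 0 ≠ s 1 := fun h => by have := hinj 0 h0r 1 h1r h; omega
    set H1 : Subgroup G := Subgroup.closure {s 0} with hH1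
    have h0H1 : s 0 ∈ H1 := Subgroup.subset_closure (Set.mem_singleton _)
    have memH1 : ∀ g ∈ H1, g = 1 ∨ g = s 0 := fun g hg => mem_closure_invol h00 hg
    have h1H1 : s 1 ∉ H1 := by
      intro h
      rcases memH1 _ h with h' | h'
      · exact hone (by rw [← h']; exact hS1)
      · exact hne01 h'.symm
    have hcB : ∀ u ∈ (↑S : Set G), u ∉ H1 → l (s 1) ≤ l u := by
      intro u hu huH
      obtain ⟨k, hk, rfl⟩ := (henum u).mp hu
      match k with
      | 0 => exact absurd h0H1 huH
      | (m+1) => exact hmono 1 (m+1) (by omega) hk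
    have dsubB : ∀ u v : G, u⁻¹ * v ∉ H1 → l (s 1) ≤ wordDist (↑S) l u v :=
      fun u v h => wordDist_subgroup_le hlpos' hgen H1 hcB h
    have h01H1 : s 0 * s 1 ∉ H1 := by
      intro h
      have hs1 : s 1 = (s 0)⁻¹ * (s 0 * s 1) := by group
      rcases memH1 _ h with h' | h'
      · refine h1H1 ?_
        rw [hs1, h', mul_one]
        exact H1.inv_mem h0H1
      · refine h1H1 ?_
        rw [hs1, h']
        exact H1.mul_mem (H1.inv_mem h0H1) h0H1
    set H2 : Subgroup G := Subgroup.closure {s 0, s 1} with hH2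
    have h0H2 : s 0 ∈ H2 := Subgroup.subset_closure (by simp)
    have h1H2 : s 1 ∈ H2 := Subgroup.subset_closure (by simp)
    have hiH2 : s i ∉ H2 := by
      intro hmem
      refine hnew ?_
      have hsub : H2 ≤ Subgroup.closure (s '' {j | j < i}) := by
        apply Subgroup.closure_mono
        rintro u (rfl | rfl)
        · exact ⟨0, by simp; omega, rfl⟩
        · exact ⟨1, by simp; omega, rfl⟩
      exact hsub hmem
    have hcΛ : ∀ u ∈ (↑S : Set G), u ∉ H2 → l (s i) ≤ l u := by
      intro u hu huH
      obtain ⟨k, hk, rfl⟩ := (henum u).mp hu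
      by_cases hki : k < i
      · exact absurd (all_in_closure_II hmin k hki) huH
      · exact hmono i k (by omega) hk
    have dsub : ∀ u v : G, u⁻¹ * v ∉ H2 → l (s i) ≤ wordDist (↑S) l u v :=
      fun u v h => wordDist_subgroup_le hlpos' hgen H2 hcΛ h
    have hn03 : (1:G)⁻¹ * s i ∉ H2 := by simpa using hiH2
    have hn13 : (s 0)⁻¹ * s i ∉ H2 := fun h =>
      hiH2 (by simpa using H2.mul_mem h0H2 h)
    have hn23 : (s 1)⁻¹ * s i ∉ H2 := fun h =>
      hiH2 (by simpa using H2.mul_mem h1H2 h)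
    have hn02 : (1:G)⁻¹ * s 1 ∉ H1 := by simpa using h1H1
    have hn12 : (s 0)⁻¹ * s 1 ∉ H1 := by
      rw [← hc1]
      exact h01H1
    refine ⟨⟨by simpa using hS0, by simpa using hS1, by simpa using hSi⟩,
      ⟨hne1 _ hS0, hne1 _ hS1, hne1 _ hSi, hne01, ?_, ?_⟩,
      l (s 1), l (s i), hmono 0 1 (by omega) h1r, hmono 1 i (by omega) hir,
      done_le _ hS0, dmin _ _ (hne1 _ hS0),
      done_le _ hS1, dsubB _ _ hn02,
      done_le _ hSi, dsub _ _ hn03,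
      dsubB _ _ hn12, dsub _ _ hn13, dmin _ _ ?_, Or.inl (dsub _ _ hn23)⟩
    · intro h; exact hiH2 (h ▸ h0H2)
    · intro h; exact hiH2 (h ▸ h1H2)
    · intro h; exact hiH2 (h ▸ h1H2)
  · -- Case III
    subst hσ1 hσ2 hσ3
    have h00 : s 0 * s 0 = 1 := by
      nth_rewrite 2 [hc1]
      exact mul_inv_cancel (s 0)
    have hne01 : s 0 ≠ s 1 := fun h => by have := hinj 0 h0r 1 h1r h; omega
    have hS1inv : (s 1)⁻¹ ∈ (↑S : Set G) := by simpa using hsymm (s 1) hS1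
    set H1 : Subgroup G := Subgroup.closure {s 0} with hH1
    have h0H1 : s 0 ∈ H1 := Subgroup.subset_closure (Set.mem_singleton _)
    have memH1 : ∀ g ∈ H1, g = 1 ∨ g = s 0 := fun g hg => mem_closure_invol h00 hg
    have hne1' : s 1 ≠ 1 := fun h => hone (by rw [← h]; exact hS1)
    have h1H1 : s 1 ∉ H1 := by
      intro h
      rcases memH1 _ h with h' | h'
      · exact hne1' h'
      · exact hne01 h'.symm
    have h1invH1 : (s 1)⁻¹ ∉ H1 := by
      intro h
      rcases memH1 _ h with h' | h'
      · exact hne1' (by rw [← inv_inv (s 1), h', inv_one])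
      · exact hne01 (by rw [← inv_inv (s 1), h', ← hc1])
    have hcB : ∀ u ∈ (↑S : Set G), u ∉ H1 → l (s 1) ≤ l u := by
      intro u hu huH
      obtain ⟨k, hk, rfl⟩ := (henum u).mp hu
      match k with
      | 0 => exact absurd h0H1 huH
      | (m+1) => exact hmono 1 (m+1) (by omega) hk
    have dsubB : ∀ u v : G, u⁻¹ * v ∉ H1 → l (s 1) ≤ wordDist (↑S) l u v :=
      fun u v h => wordDist_subgroup_le hlpos' hgen H1 hcB h
    have hn02 : (1:G)⁻¹ * s 1 ∉ H1 := by simpa using h1H1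
    have hn03 : (1:G)⁻¹ * (s 1)⁻¹ ∉ H1 := by simpa using h1invH1
    have hn12 : (s 0)⁻¹ * s 1 ∉ H1 := fun h =>
      h1H1 (by simpa using H1.mul_mem h0H1 h)
    have hn13 : (s 0)⁻¹ * (s 1)⁻¹ ∉ H1 := fun h =>
      h1invH1 (by simpa using H1.mul_mem h0H1 h)
    have hne03 : s 0 ≠ (s 1)⁻¹ := by
      intro h
      exact h1invH1 (h ▸ h0H1)
    refine ⟨⟨by simpa using hS0, by simpa using hS1, by simpa using hS1inv⟩,
      ⟨hne1 _ hS0, hne1 _ hS1, hne1 _ hS1inv, hne01, hne03, hc2⟩,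
      l (s 1), l (s 1), hmono 0 1 (by omega) h1r, le_refl _,
      done_le _ hS0, dmin _ _ (hne1 _ hS0),
      done_le _ hS1, dsubB _ _ hn02,
      le_trans (done_le _ hS1inv) (le_of_eq (hlsymm _ hS1)), dsubB _ _ hn03,
      dsubB _ _ hn12, dsubB _ _ hn13, dmin _ _ hc2, Or.inr (le_refl _)⟩

end Kit
end WDAux

namespace WDAux
section Tour
variable {G : Type*} [Group G]

noncomputable def TSet (S : Set G) (l : G → ℝ) (η : G →₀ ZMod 2) (x : G) : Set ℝ :=
  {r | ∃ (n : ℕ) (p : Fin (n + 1) → G), p 0 = 1 ∧ p (Fin.last n) = x ∧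
    (∀ i : Fin n, (p i.castSucc)⁻¹ * p i.succ ∈ S) ∧
    (↑η.support : Set G) ⊆ Set.range p ∧
    r = ∑ i : Fin n, l ((p i.castSucc)⁻¹ * p i.succ)}

lemma tour_mem {S : Set G} {l : G → ℝ} {η : G →₀ ZMod 2} {x : G} (L : List G)
    (hL : ∀ u ∈ L, u ∈ S) (hx : L.prod = x)
    (hsupp : ∀ g ∈ η.support, ∃ k : ℕ, (L.take k).prod = g) :
    (L.map l).sum ∈ TSet S l η x := by
  have hstep : ∀ i : Fin L.length,
      ((fun j : Fin (L.length + 1) => (L.take (j : ℕ)).prod) i.castSucc)⁻¹ *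
        ((fun j : Fin (L.length + 1) => (L.take (j : ℕ)).prod) i.succ) = L.get i := by
    intro i
    have ht : L.take ((i : ℕ) + 1) = L.take (i : ℕ) ++ [L.get i] := by
      rw [List.take_succ]
      congr 1
      rw [List.getElem?_eq_getElem i.isLt]
      rfl
    simp only [Fin.coe_castSucc, Fin.val_succ]
    rw [ht, List.prod_append, List.prod_singleton, inv_mul_cancel_left]
  refine ⟨L.length, fun j => (L.take (j : ℕ)).prod, by simp, ?_, ?_, ?_, ?_⟩
  · show (L.take ((Fin.last L.length) : ℕ)).prod = x
    rw [Fin.val_last, List.take_length, hx]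
  · intro i
    rw [hstep i]
    exact hL _ (List.get_mem L i)
  · intro g hg
    obtain ⟨k, hk⟩ := hsupp g (by simpa using hg)
    rcases le_or_gt k L.length with h | h
    · exact ⟨⟨k, by omega⟩, hk⟩
    · refine ⟨Fin.last _, ?_⟩
      show (L.take ((Fin.last L.length) : ℕ)).prod = g
      rw [Fin.val_last, List.take_length, ← List.take_of_length_le h.le, hk]
  · rw [Finset.sum_congr rfl (fun i _ => by rw [hstep i])]
    conv_lhs => rw [← List.ofFn_get L, List.map_ofFn, List.sum_ofFn]
    rfl

lemma tour_lower {S : Set G} {l : G → ℝ}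
    (hlpos : ∀ u ∈ S, 0 < l u)
    (hgen : ∀ g : G, ∃ (n : ℕ) (f : Fin n → G), (∀ i, f i ∈ S) ∧ g = (List.ofFn f).prod)
    {η : G →₀ ZMod 2} {x : G} {t : ℝ} (ht : t ∈ TSet S l η x)
    (g1 g2 g3 g4 : G) {c : ℝ}
    (hg1 : g1 ∈ η.support) (hg2 : g2 ∈ η.support)
    (hg3 : g3 ∈ η.support) (hg4 : g4 ∈ η.support)
    (d12 : g1 ≠ g2) (d13 : g1 ≠ g3) (d14 : g1 ≠ g4)
    (d23 : g2 ≠ g3) (d24 : g2 ≠ g4) (d34 : g3 ≠ g4)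
    (hstar : ∀ w1 w2 w3 w4 : G,
      (w1 = g1 ∨ w1 = g2 ∨ w1 = g3 ∨ w1 = g4) →
      (w2 = g1 ∨ w2 = g2 ∨ w2 = g3 ∨ w2 = g4) →
      (w3 = g1 ∨ w3 = g2 ∨ w3 = g3 ∨ w3 = g4) →
      (w4 = g1 ∨ w4 = g2 ∨ w4 = g3 ∨ w4 = g4) →
      w1 ≠ w2 → w1 ≠ w3 → w1 ≠ w4 → w2 ≠ w3 → w2 ≠ w4 → w3 ≠ w4 →
      wordDist S l w1 w4 + c ≤ wordDist S l w1 w2 + wordDist S l w2 w3 + wordDist S l w3 w4) :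
    wordDist S l 1 x + c ≤ t := by
  obtain ⟨n, p, hp0, hpl, hpS, hpsub, rfl⟩ := ht
  set q : ℕ → G := fun j => p ⟨min j n, Nat.lt_succ_of_le (min_le_right _ _)⟩ with hq
  have hqe : ∀ e : Fin (n + 1), q (e : ℕ) = p e := by
    intro e
    apply congr_arg p
    exact Fin.ext (min_eq_left (Nat.lt_succ_iff.mp e.isLt))
  have hq0 : q 0 = 1 := by
    rw [show (0:ℕ) = ((0 : Fin (n+1)) : ℕ) by rfl, hqe]
    exact hp0
  have hqn : q n = x := by
    rw [show (n:ℕ) = ((Fin.last n : Fin (n+1)) : ℕ) by rw [Fin.val_last], hqe]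
    exact hpl
  have hbr : ∀ i : Fin n, (q (i : ℕ))⁻¹ * q ((i : ℕ) + 1) = (p i.castSucc)⁻¹ * p i.succ := by
    intro i
    rw [show ((i : ℕ) + 1 : ℕ) = ((i.succ : Fin (n+1)) : ℕ) from rfl, hqe,
      show ((i : ℕ) : ℕ) = ((i.castSucc : Fin (n+1)) : ℕ) from rfl, hqe]
  have hsum : ∑ i : Fin n, l ((p i.castSucc)⁻¹ * p i.succ)
      = ∑ i ∈ Finset.Ico 0 n, l ((q i)⁻¹ * q (i + 1)) := by
    rw [← Finset.range_eq_Ico, ← Fin.sum_univ_eq_sum_range (fun i => l ((q i)⁻¹ * q (i + 1))) n]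
    exact (Finset.sum_congr rfl (fun i _ => by rw [hbr i])).symm
  have seg : ∀ k, k ≤ n → ∀ j, j ≤ k →
      wordDist S l (q j) (q k) ≤ ∑ i ∈ Finset.Ico j k, l ((q i)⁻¹ * q (i + 1)) := by
    intro k
    induction k with
    | zero =>
      intro _ j hj
      have : j = 0 := by omega
      subst this
      simp [wordDist_self hlpos]
    | succ k IH =>
      intro hk j hj
      rcases Nat.lt_or_ge j (k + 1) with hlt | hge
      · have hjk : j ≤ k := by omega
        have hkn : k < n := by omega
        have hstepk : (q k)⁻¹ * q (k + 1) ∈ S := by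
          have := hpS ⟨k, hkn⟩
          rwa [← hbr ⟨k, hkn⟩] at this
        have hone : wordDist S l (q k) (q (k + 1)) ≤ l ((q k)⁻¹ * q (k + 1)) := by
          have h := wordDist_le_single hlpos hstepk (q k)
          rwa [mul_inv_cancel_left] at h
        rw [Finset.sum_Ico_succ_top hjk]
        have htr := wordDist_triangle hlpos hgen (q j) (q k) (q (k + 1))
        have hIH := IH (by omega) j hjk
        linarith
      · have : j = k + 1 := by omega
        subst this
        simp [wordDist_self hlpos]
  obtain ⟨τ1, hτ1⟩ := hpsub (by simpa using hg1)
  obtain ⟨τ2, hτ2⟩ := hpsub (by simpa using hg2)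
  obtain ⟨τ3, hτ3⟩ := hpsub (by simpa using hg3)
  obtain ⟨τ4, hτ4⟩ := hpsub (by simpa using hg4)
  set Ls := List.insertionSort (· ≤ ·) ([τ1, τ2, τ3, τ4]) with hLs
  have hperm : Ls.Perm ([τ1, τ2, τ3, τ4]) := List.perm_insertionSort _ _
  have hsorted : Ls.Pairwise (· ≤ ·) := List.pairwise_insertionSort _ _
  have hlen : Ls.length = 4 := by rw [hperm.length_eq]; rfl
  obtain ⟨e1, e2, e3, e4, hLeq⟩ : ∃ e1 e2 e3 e4, Ls = [e1, e2, e3, e4] := by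
    match Ls, hlen with
    | [a, b, c, d], _ => exact ⟨a, b, c, d, rfl⟩
  rw [hLeq] at hperm hsorted
  have h12 : e1 ≤ e2 := by simp [List.pairwise_cons] at hsorted; tauto
  have h23 : e2 ≤ e3 := by simp [List.pairwise_cons] at hsorted; tauto
  have h34 : e3 ≤ e4 := by simp [List.pairwise_cons] at hsorted; tauto
  have hmapperm : ([p e1, p e2, p e3, p e4]).Perm ([g1, g2, g3, g4]) := by
    have h := hperm.map p
    simpa [hτ1, hτ2, hτ3, hτ4] using h
  have hnodup : ([p e1, p e2, p e3, p e4]).Nodup := by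
    rw [hmapperm.nodup_iff]
    simp [d12, d13, d14, d23, d24, d34]
  have hmem : ∀ w ∈ ([p e1, p e2, p e3, p e4]), w = g1 ∨ w = g2 ∨ w = g3 ∨ w = g4 := by
    intro w hw
    have := hmapperm.mem_iff.mp hw
    simpa using this
  simp only [List.nodup_cons, List.mem_cons, List.mem_singleton, List.not_mem_nil,
    or_false, not_or, List.nodup_nil, and_true] at hnodup
  obtain ⟨⟨ne12, ne13, ne14⟩, ⟨ne23, ne24⟩, ne34, -⟩ := hnodup
  have hstar' := hstar (p e1) (p e2) (p e3) (p e4)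
    (hmem _ (by simp)) (hmem _ (by simp)) (hmem _ (by simp)) (hmem _ (by simp))
    ne12 ne13 ne14 ne23 ne24 ne34
  have ha1n : (e1 : ℕ) ≤ n := Nat.lt_succ_iff.mp e1.isLt
  have ha2n : (e2 : ℕ) ≤ n := Nat.lt_succ_iff.mp e2.isLt
  have ha3n : (e3 : ℕ) ≤ n := Nat.lt_succ_iff.mp e3.isLt
  have ha4n : (e4 : ℕ) ≤ n := Nat.lt_succ_iff.mp e4.isLt
  have ha12 : (e1 : ℕ) ≤ (e2 : ℕ) := h12
  have ha23 : (e2 : ℕ) ≤ (e3 : ℕ) := h23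
  have ha34 : (e3 : ℕ) ≤ (e4 : ℕ) := h34
  set f : ℕ → ℝ := fun i => l ((q i)⁻¹ * q (i + 1)) with hf
  have s1 := Finset.sum_Ico_consecutive f (Nat.zero_le (e1 : ℕ)) ha12
  have s2 := Finset.sum_Ico_consecutive f (Nat.zero_le (e2 : ℕ)) ha23
  have s3 := Finset.sum_Ico_consecutive f (Nat.zero_le (e3 : ℕ)) ha34
  have s4 := Finset.sum_Ico_consecutive f (Nat.zero_le (e4 : ℕ)) ha4n
  have b0 := seg (e1 : ℕ) ha1n 0 (Nat.zero_le _)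
  have b1 := seg (e2 : ℕ) ha2n (e1 : ℕ) ha12
  have b2 := seg (e3 : ℕ) ha3n (e2 : ℕ) ha23
  have b3 := seg (e4 : ℕ) ha4n (e3 : ℕ) ha34
  have b4 := seg n le_rfl (e4 : ℕ) ha4n
  rw [hq0, hqe] at b0
  rw [hqe, hqe] at b1 b2 b3
  rw [hqe, hqn] at b4
  have htr1 := wordDist_triangle hlpos hgen 1 (p e1) x
  have htr2 := wordDist_triangle hlpos hgen (p e1) (p e4) x
  rw [hsum]
  linarith

end Tour
end WDAux

/-- for every `y` and every `x ∉ B_y = {y, yσ₁, yσ₂, yσ₃}`, any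
travelling salesman tour from `e` to `x` visiting all four points of `B_y` is at
least `r₁` longer than `d(e,x)`. -/
theorem statement_8 {G : Type*} [Group G] [Infinite G]
    (S : Finset G) (l : G → ℝ) (r : ℕ) (hr : 3 ≤ r) (s : ℕ → G)
    (henum : ∀ x, x ∈ S ↔ ∃ i < r, s i = x)
    (hinj : ∀ i < r, ∀ j < r, s i = s j → i = j)
    (hmono : ∀ i j, i ≤ j → j < r → l (s i) ≤ l (s j))
    (hone : (1 : G) ∉ S) (hsymm : ∀ t ∈ S, t⁻¹ ∈ S)
    (hlpos : ∀ t ∈ S, 0 < l t) (hlsymm : ∀ t ∈ S, l t⁻¹ = l t)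
    (hgen : ∀ x : G, ∃ (n : ℕ) (f : Fin n → G), (∀ i, f i ∈ S) ∧ x = (List.ofFn f).prod)
    (hno2 : ∀ t ∈ S, ∀ t' ∈ S, t⁻¹ ∈ ({t, t'} : Set G) → t'⁻¹ ∈ ({t, t'} : Set G) →
      Subgroup.closure ({t, t'} : Set G) ≠ ⊤)
    (σ₁ σ₂ σ₃ : G)
    (hcase : CaseI s r σ₁ σ₂ σ₃ ∨ CaseII s r σ₁ σ₂ σ₃ ∨ CaseIII s σ₁ σ₂ σ₃)
    :
    ∀ y x : G, x ∉ ({y, y * σ₁, y * σ₂, y * σ₃} : Set G) →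
      wordDist (↑S) l 1 x + l (s 0) ≤
        dTS (↑S) l
          (Finsupp.single y (1 : ZMod 2) + Finsupp.single (y * σ₁) (1 : ZMod 2)
            + Finsupp.single (y * σ₂) (1 : ZMod 2) + Finsupp.single (y * σ₃) (1 : ZMod 2))
          x := by
  intro y x _hxB
  classical
  obtain ⟨⟨hσ1S, hσ2S, hσ3S⟩, ⟨ne01, ne02, ne03, ne12s, ne13s, ne23s⟩, m2, m3, hm2, hm23,
      u01, l01, u02, l02, u03, l03, l12, l13, l23, hdisj⟩ :=
    WDAux.kit hr henum hinj hmono hone hsymm hlpos hlsymm hgen hcase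
  have hlpos' : ∀ u ∈ (↑S : Set G), 0 < l u := fun u hu => hlpos u hu
  have hsymm' : ∀ u ∈ (↑S : Set G), u⁻¹ ∈ (↑S : Set G) := fun u hu => by
    simpa using hsymm u hu
  have hlsymm' : ∀ u ∈ (↑S : Set G), l u⁻¹ = l u := fun u hu => hlsymm u hu
  set η := (Finsupp.single y (1 : ZMod 2) + Finsupp.single (y * σ₁) (1 : ZMod 2)
      + Finsupp.single (y * σ₂) (1 : ZMod 2) + Finsupp.single (y * σ₃) (1 : ZMod 2)) with hη
  have hcancel : ∀ u v : G, y * u = y * v → u = v := fun u v h => mul_left_cancel h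
  have hy1 : y ≠ y * σ₁ := fun h => ne01 (hcancel 1 σ₁ (by rw [mul_one]; exact h))
  have hy2 : y ≠ y * σ₂ := fun h => ne02 (hcancel 1 σ₂ (by rw [mul_one]; exact h))
  have hy3 : y ≠ y * σ₃ := fun h => ne03 (hcancel 1 σ₃ (by rw [mul_one]; exact h))
  have h12 : y * σ₁ ≠ y * σ₂ := fun h => ne12s (hcancel _ _ h)
  have h13 : y * σ₁ ≠ y * σ₃ := fun h => ne13s (hcancel _ _ h)
  have h23 : y * σ₂ ≠ y * σ₃ := fun h => ne23s (hcancel _ _ h)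
  have hval : ∀ u : G, η u = (if y = u then (1 : ZMod 2) else 0)
      + (if y * σ₁ = u then 1 else 0) + (if y * σ₂ = u then 1 else 0)
      + (if y * σ₃ = u then 1 else 0) := fun u => by
    simp [hη, Finsupp.add_apply, Finsupp.single_apply]
  have hmem1 : y ∈ η.support := by
    rw [Finsupp.mem_support_iff, hval, if_pos rfl, if_neg (Ne.symm hy1),
      if_neg (Ne.symm hy2), if_neg (Ne.symm hy3)]
    norm_num
  have hmem2 : y * σ₁ ∈ η.support := by
    rw [Finsupp.mem_support_iff, hval, if_neg hy1, if_pos rfl, if_neg (Ne.symm h12),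
      if_neg (Ne.symm h13)]
    norm_num
  have hmem3 : y * σ₂ ∈ η.support := by
    rw [Finsupp.mem_support_iff, hval, if_neg hy2, if_neg h12, if_pos rfl,
      if_neg (Ne.symm h23)]
    norm_num
  have hmem4 : y * σ₃ ∈ η.support := by
    rw [Finsupp.mem_support_iff, hval, if_neg hy3, if_neg h13, if_neg h23, if_pos rfl]
    norm_num
  -- a travelling salesman tour exists, so the defining set is nonempty
  obtain ⟨n1, f1, hf1, hyw⟩ := hgen y
  obtain ⟨n2, f2, hf2, hxw⟩ := hgen (y⁻¹ * x)
  set Ly := List.ofFn f1 with hLy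
  set Lx := List.ofFn f2 with hLx
  set M : List G := σ₁ :: σ₁⁻¹ :: σ₂ :: σ₂⁻¹ :: σ₃ :: σ₃⁻¹ :: Lx with hM
  set L := Ly ++ M with hL
  have hLmem : ∀ u ∈ L, u ∈ (↑S : Set G) := by
    intro u hu
    rw [hL, List.mem_append] at hu
    rcases hu with hu | hu
    · rw [hLy, List.mem_ofFn] at hu
      obtain ⟨i, rfl⟩ := hu
      exact hf1 i
    · rw [hM] at hu
      simp only [List.mem_cons] at hu
      rcases hu with rfl | rfl | rfl | rfl | rfl | rfl | hu
      · exact hσ1S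
      · exact Finset.mem_coe.mpr (hsymm _ hσ1S)
      · exact hσ2S
      · exact Finset.mem_coe.mpr (hsymm _ hσ2S)
      · exact hσ3S
      · exact Finset.mem_coe.mpr (hsymm _ hσ3S)
      · rw [hLx, List.mem_ofFn] at hu
        obtain ⟨i, rfl⟩ := hu
        exact hf2 i
  have hLprod : L.prod = x := by
    rw [hL, List.prod_append, hM]
    simp only [List.prod_cons, mul_inv_cancel_left, inv_mul_cancel_left]
    rw [← hyw, ← hxw, mul_inv_cancel_left]
  have hsupp4 : ∀ g, η g ≠ 0 → g = y ∨ g = y * σ₁ ∨ g = y * σ₂ ∨ g = y * σ₃ := by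
    intro g hgne
    by_contra hcon
    push_neg at hcon
    obtain ⟨ha, hb, hc, hdd⟩ := hcon
    apply hgne
    rw [hval, if_neg (fun h => ha h.symm), if_neg (fun h => hb h.symm),
      if_neg (fun h => hc h.symm), if_neg (fun h => hdd h.symm)]
    norm_num
  have hsupp : ∀ g ∈ η.support, ∃ k : ℕ, (L.take k).prod = g := by
    intro g hg
    rcases hsupp4 g (Finsupp.mem_support_iff.mp hg) with rfl | rfl | rfl | rfl
    · refine ⟨Ly.length, ?_⟩
      rw [hL, List.take_left, ← hyw]
    · refine ⟨Ly.length + 1, ?_⟩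
      rw [hL, List.take_append, hM]
      simp [← hyw, List.prod_append, List.take_of_length_le]
    · refine ⟨Ly.length + 3, ?_⟩
      rw [hL, List.take_append, hM]
      simp [← hyw, List.prod_append, List.take_of_length_le]
    · refine ⟨Ly.length + 5, ?_⟩
      rw [hL, List.take_append, hM]
      simp [← hyw, List.prod_append, List.take_of_length_le]
  have htour := WDAux.tour_mem (S := (↑S : Set G)) (l := l) (η := η) (x := x)
    L hLmem hLprod hsupp
  have hdts : dTS (↑S) l η x = sInf (WDAux.TSet (↑S) l η x) := rfl
  rw [hdts]
  refine le_csInf ⟨_, htour⟩ ?_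
  intro t ht
  have dsymm : ∀ u v : G, wordDist (↑S) l u v = wordDist (↑S) l v u :=
    WDAux.wordDist_symm hsymm' hlsymm'
  have shift : ∀ u v : G, wordDist (↑S) l (y * u) (y * v) = wordDist (↑S) l u v :=
    WDAux.wordDist_mul_left y
  have E1 : wordDist (↑S) l y (y * σ₁) = wordDist (↑S) l 1 σ₁ := by
    nth_rewrite 1 [← mul_one y]
    exact shift 1 σ₁
  have E2 : wordDist (↑S) l y (y * σ₂) = wordDist (↑S) l 1 σ₂ := by
    nth_rewrite 1 [← mul_one y]
    exact shift 1 σ₂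
  have E3 : wordDist (↑S) l y (y * σ₃) = wordDist (↑S) l 1 σ₃ := by
    nth_rewrite 1 [← mul_one y]
    exact shift 1 σ₃
  refine WDAux.tour_lower hlpos' hgen ht y (y * σ₁) (y * σ₂) (y * σ₃)
    hmem1 hmem2 hmem3 hmem4 hy1 hy2 hy3 h12 h13 h23 ?_
  intro w1 w2 w3 w4 hw1 hw2 hw3 hw4 n12 n13 n14 n23 n24 n34
  refine WDAux.star (wordDist (↑S) l) dsymm y (y * σ₁) (y * σ₂) (y * σ₃)
    (l (s 0)) m2 m3 hm2 hm23
    (by rw [E1]; exact u01) (by rw [E1]; exact l01)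
    (by rw [E2]; exact u02) (by rw [E2]; exact l02)
    (by rw [E3]; exact u03) (by rw [E3]; exact l03)
    (by rw [shift σ₁ σ₂]; exact l12) (by rw [shift σ₁ σ₃]; exact l13)
    (by rw [shift σ₂ σ₃]; exact l23)
    (WDAux.wordDist_triangle hlpos' hgen _ _ _)
    (WDAux.wordDist_triangle hlpos' hgen _ _ _)
    (WDAux.wordDist_triangle hlpos' hgen _ _ _)
    ?_ hw1 hw2 hw3 hw4 n12 n13 n14 n23 n24 n34
  rcases hdisj with h | h
  · exact Or.inl (by rw [shift σ₂ σ₃]; exact h)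
  · exact Or.inr h
end
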